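/- arXiv:2404.09289 — 8 statements merged into one kernel-verified Lean document; each statement's English description precedes it below -/
import Mathlib

section
/- Let G be a graph of maximum degree at most d, let k > 0 be an integer, and let v be a vertex of G. Then the number of subtrees of G on exactly k vertices that contain v is at most (e·d)^{k−1}, where e is Euler's number. -/
open MeasureTheory

noncomputable section


namespace TreeCountAux
open Finset List

/-- strict prefix is lex-smaller -/
lemma lt_of_prefix_ne {α : Type*} [LinearOrder α] :
    ∀ {a b : List α}, b <+: a → b ≠ a → b < a := by
  intro a
  induction a with
  | nil => intro b h hne; exact absurd (List.prefix_nil.mp h) hne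
  | cons x a ih =>
    intro b h hne
    match b with
    | [] => exact List.nil_lt_cons x a
    | y :: b' =>
      obtain ⟨rfl, htail⟩ := (List.cons_prefix_cons).mp h
      have hb' : b' ≠ a := by rintro rfl; exact hne rfl
      exact List.Lex.cons (ih htail hb')

lemma dropLast_lt {α : Type*} [LinearOrder α] {l : List α} (h : l ≠ []) :
    l.dropLast < l := by
  refine lt_of_prefix_ne (List.dropLast_prefix l) ?_
  intro he
  have := congrArg List.length he
  rw [List.length_dropLast] at this
  have hl : 0 < l.length := List.length_pos_iff.mpr h
  omega

lemma dropLast_append_toList {α : Type*} {l : List α} (h : l ≠ []) :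
    l.dropLast ++ l.getLast?.toList = l := by
  rw [List.getLast?_eq_getLast h]
  simpa using List.dropLast_append_getLast h

section rk
variable {α : Type*} [LinearOrder α]

/-- rank of `b` in `A` -/
def rk (A : Finset α) (b : α) : ℕ := (A.filter (fun x => x < b)).card

lemma rk_lt_card {A : Finset α} {b : α} (hb : b ∈ A) : rk A b < A.card := by
  refine Finset.card_lt_card ⟨Finset.filter_subset _ _, ?_⟩
  intro hsub
  have := hsub hb
  simp at this

lemma rk_strictMono {A : Finset α} {a b : α} (ha : a ∈ A) (hab : a < b) :
    rk A a < rk A b := by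
  refine Finset.card_lt_card ⟨?_, ?_⟩
  · intro x hx
    simp only [Finset.mem_filter] at hx ⊢
    exact ⟨hx.1, hx.2.trans hab⟩
  · intro hsub
    have := hsub (Finset.mem_filter.mpr ⟨ha, hab⟩)
    simp at this

lemma sorted_lt (A : Finset α) : (A.sort (· ≤ ·)).Pairwise (· < ·) := A.sortedLT_sort.pairwise

lemma pairwise_getElem {A : Finset α} {i j : ℕ} (hi : i < (A.sort (· ≤ ·)).length)
    (hj : j < (A.sort (· ≤ ·)).length) (hij : i < j) :
    (A.sort (· ≤ ·))[i] < (A.sort (· ≤ ·))[j] :=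
  List.pairwise_iff_getElem.mp (sorted_lt A) i j hi hj hij

lemma rk_getElem {A : Finset α} {i : ℕ} (hi : i < (A.sort (· ≤ ·)).length) :
    rk A (A.sort (· ≤ ·))[i] = i := by
  set L := A.sort (· ≤ ·) with hL
  have hfil : A.filter (fun x => x < L[i]) = (L.take i).toFinset := by
    ext x
    simp only [Finset.mem_filter, List.mem_toFinset]
    constructor
    · rintro ⟨hxA, hxlt⟩
      have hxL : x ∈ L := by rw [hL, Finset.mem_sort]; exact hxA
      obtain ⟨j, hj, hje⟩ := List.getElem_of_mem hxL
      have hji : j < i := by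
        by_contra hge
        push_neg at hge
        rcases eq_or_lt_of_le hge with rfl | hlt
        · rw [hje] at hxlt; exact lt_irrefl _ hxlt
        · have := pairwise_getElem hi hj hlt
          rw [hje] at this
          exact absurd hxlt (asymm this)
      have : (L.take i)[j]'(by simp [hj]; omega) = x := by
        rw [List.getElem_take]; exact hje
      exact this ▸ List.getElem_mem _
    · intro hx
      obtain ⟨j, hj, hje⟩ := List.getElem_of_mem hx
      have hjlen : j < i := by simp [List.length_take] at hj; omega
      rw [List.getElem_take] at hje
      have hjL : j < L.length := by omega
      constructor
      · rw [← hje]; rw [← Finset.mem_sort (α := α) (· ≤ ·)]; exact List.getElem_mem _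
      · rw [← hje]; exact pairwise_getElem hjL hi hjlen
  rw [rk, hfil]
  rw [List.toFinset_card_of_nodup ((sorted_lt A).nodup.sublist (List.take_sublist i L))]
  simp only [List.length_take]
  omega

lemma exists_getElem_of_mem {A : Finset α} {b : α} (hb : b ∈ A) :
    ∃ j, ∃ hj : j < (A.sort (· ≤ ·)).length, (A.sort (· ≤ ·))[j] = b ∧ rk A b = j := by
  have hbL : b ∈ A.sort (· ≤ ·) := (Finset.mem_sort _).mpr hb
  obtain ⟨j, hj, hje⟩ := List.getElem_of_mem hbL
  exact ⟨j, hj, hje, by rw [← hje, rk_getElem hj]⟩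

lemma getElem_rk {A : Finset α} {b : α} (hb : b ∈ A) (h : rk A b < (A.sort (· ≤ ·)).length) :
    (A.sort (· ≤ ·))[rk A b] = b := by
  obtain ⟨j, hj, hje, hrk⟩ := exists_getElem_of_mem hb
  subst hrk; exact hje

lemma notin_take {A : Finset α} {i : ℕ} (hi : i < (A.sort (· ≤ ·)).length) :
    (A.sort (· ≤ ·))[i] ∉ (A.sort (· ≤ ·)).take i := by
  intro hmem
  obtain ⟨j, hj, hje⟩ := List.getElem_of_mem hmem
  have hjlen : j < i := by simp [List.length_take] at hj; omega
  rw [List.getElem_take] at hje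
  have := pairwise_getElem (by omega) hi hjlen
  rw [hje] at this
  exact lt_irrefl _ this

lemma getElem_le_of_notin_take {A : Finset α} {i : ℕ} (hi : i < (A.sort (· ≤ ·)).length)
    {x : α} (hx : x ∈ A) (hnx : x ∉ (A.sort (· ≤ ·)).take i) :
    (A.sort (· ≤ ·))[i] ≤ x := by
  obtain ⟨j, hj, hje, _⟩ := exists_getElem_of_mem hx
  rcases lt_trichotomy j i with hlt | heq | hgt
  · exfalso
    apply hnx
    have : (((A.sort (· ≤ ·)).take i))[j]'(by rw [List.length_take]; exact lt_min hlt hj) = x := by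
      rw [List.getElem_take]; exact hje
    exact this ▸ List.getElem_mem _
  · subst heq; exact hje.le
  · exact le_of_lt (hje ▸ pairwise_getElem hi hj hgt)

end rk


section code
variable {d : ℕ}

/-- valid address sets -/
def Valid (k : ℕ) (A : Finset (List (Fin d))) : Prop :=
  A.card = k ∧ [] ∈ A ∧ ∀ a ∈ A, a ≠ [] → a.dropLast ∈ A

/-- code of an address set -/
def code (A : Finset (List (Fin d))) : Finset (ℕ × Option (Fin d)) :=
  (A.erase []).image fun a => (rk A a.dropLast, a.getLast?)

lemma sort_length {k : ℕ} {A : Finset (List (Fin d))} (hA : Valid k A) :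
    (A.sort (· ≤ ·)).length = k := by rw [Finset.length_sort, hA.1]

lemma sort_zero {k : ℕ} {A : Finset (List (Fin d))} (hA : Valid k A)
    (h0 : 0 < (A.sort (· ≤ ·)).length) : (A.sort (· ≤ ·))[0] = [] := by
  obtain ⟨j, hj, hje, _⟩ := exists_getElem_of_mem hA.2.1
  rcases Nat.eq_zero_or_pos j with rfl | hpos
  · exact hje
  · exfalso
    have := pairwise_getElem h0 hj hpos
    rw [hje] at this
    generalize (A.sort (· ≤ ·))[0] = x at this
    cases this

/-- part (a): representation of the i-th element -/
lemma repr_getElem {k : ℕ} {A : Finset (List (Fin d))} (hA : Valid k A) {i : ℕ}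
    (h0 : 0 < i) (hi : i < (A.sort (· ≤ ·)).length) :
    ∃ j os, (j, os) ∈ code A ∧ j < i ∧
      (∃ hj : j < (A.sort (· ≤ ·)).length,
        (A.sort (· ≤ ·))[i] = (A.sort (· ≤ ·))[j] ++ os.toList) := by
  have haA : (A.sort (· ≤ ·))[i] ∈ A := by
    rw [← Finset.mem_sort (α := List (Fin d)) (· ≤ ·)]; exact List.getElem_mem _
  have hane : (A.sort (· ≤ ·))[i] ≠ [] := by
    intro h
    have h0len : 0 < (A.sort (· ≤ ·)).length := by omega
    have hpw := pairwise_getElem h0len hi h0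
    rw [sort_zero hA h0len, h] at hpw
    exact lt_irrefl _ hpw
  have hpA : (A.sort (· ≤ ·))[i].dropLast ∈ A := hA.2.2 _ haA hane
  refine ⟨rk A (A.sort (· ≤ ·))[i].dropLast, (A.sort (· ≤ ·))[i].getLast?, ?_, ?_, ?_⟩
  · exact Finset.mem_image.mpr ⟨_, Finset.mem_erase.mpr ⟨hane, haA⟩, rfl⟩
  · have h1 : rk A (A.sort (· ≤ ·))[i].dropLast < rk A (A.sort (· ≤ ·))[i] :=
      rk_strictMono hpA (dropLast_lt hane)
    have h2 : rk A (A.sort (· ≤ ·))[i] = i := rk_getElem hi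
    omega
  · have hjlen : rk A (A.sort (· ≤ ·))[i].dropLast < (A.sort (· ≤ ·)).length := by
      have := rk_lt_card hpA
      rw [Finset.length_sort]; omega
    refine ⟨hjlen, ?_⟩
    rw [getElem_rk hpA hjlen, dropLast_append_toList hane]

/-- part (b): elements built from code entries are in A -/
lemma code_entry_mem {k : ℕ} {A : Finset (List (Fin d))} (hA : Valid k A) {j : ℕ}
    {os : Option (Fin d)} (hc : (j, os) ∈ code A) :
    ∃ hj : j < (A.sort (· ≤ ·)).length, (A.sort (· ≤ ·))[j] ++ os.toList ∈ A := by
  obtain ⟨b, hb, hbe⟩ := Finset.mem_image.mp hc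
  obtain ⟨hbne, hbA⟩ := Finset.mem_erase.mp hb
  have h1 : rk A b.dropLast = j := congrArg Prod.fst hbe
  have h2 : b.getLast? = os := congrArg Prod.snd hbe
  subst h1; subst h2
  have hpA : b.dropLast ∈ A := hA.2.2 b hbA hbne
  have hjlen : rk A b.dropLast < (A.sort (· ≤ ·)).length := by
    rw [Finset.length_sort]; exact rk_lt_card hpA
  refine ⟨hjlen, ?_⟩
  rw [getElem_rk hpA hjlen, dropLast_append_toList hbne]
  exact hbA

/-- the main injectivity lemma -/
lemma code_inj {k : ℕ} {A B : Finset (List (Fin d))} (hA : Valid k A) (hB : Valid k B)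
    (h : code A = code B) : A = B := by
  have hlenA : (A.sort (· ≤ ·)).length = k := sort_length hA
  have hlenB : (B.sort (· ≤ ·)).length = k := sort_length hB
  have main : ∀ (C D : Finset (List (Fin d))), Valid k C → Valid k D →
      code C = code D → ∀ (i : ℕ), 0 < i →
      (C.sort (· ≤ ·)).take i = (D.sort (· ≤ ·)).take i →
      ∀ (hiC : i < (C.sort (· ≤ ·)).length) (hiD : i < (D.sort (· ≤ ·)).length),
      (C.sort (· ≤ ·))[i] ≤ (D.sort (· ≤ ·))[i] := by
    intro C D hC hD hcode i hpos htake hiC hiD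
    obtain ⟨j, os, hcmem, hji, hjD, hrep⟩ := repr_getElem hD hpos hiD
    have hjC : j < (C.sort (· ≤ ·)).length := by
      rw [sort_length hC]; rw [sort_length hD] at hjD; exact hjD
    have hgetEq : (C.sort (· ≤ ·))[j] = (D.sort (· ≤ ·))[j] := by
      have hq : ((C.sort (· ≤ ·)).take i)[j]? = ((D.sort (· ≤ ·)).take i)[j]? := by
        rw [htake]
      rw [List.getElem?_eq_getElem (by rw [List.length_take]; exact lt_min hji hjC),
        List.getElem?_eq_getElem (by rw [List.length_take]; exact lt_min hji hjD)] at hq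
      have hq' := Option.some_injective _ hq
      rwa [List.getElem_take, List.getElem_take] at hq'
    rw [hrep, ← hgetEq]
    have hcmem' : (j, os) ∈ code C := by rw [hcode]; exact hcmem
    obtain ⟨_, hxC⟩ := code_entry_mem hC hcmem'
    refine getElem_le_of_notin_take hiC hxC ?_
    rw [htake, hgetEq, ← hrep]
    exact notin_take hiD
  have key : ∀ i, (A.sort (· ≤ ·)).take i = (B.sort (· ≤ ·)).take i := by
    intro i
    induction i with
    | zero => simp
    | succ i ih =>
      rw [List.take_succ, List.take_succ, ih]
      have hopt : (A.sort (· ≤ ·))[i]? = (B.sort (· ≤ ·))[i]? := by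
        by_cases hik : i < k
        · have hiA : i < (A.sort (· ≤ ·)).length := by omega
          have hiB : i < (B.sort (· ≤ ·)).length := by omega
          rw [List.getElem?_eq_getElem hiA, List.getElem?_eq_getElem hiB]
          refine congrArg some ?_
          rcases Nat.eq_zero_or_pos i with rfl | hpos
          · rw [sort_zero hA (by omega), sort_zero hB (by omega)]
          · exact le_antisymm
              (main A B hA hB h i hpos ih hiA hiB)
              (main B A hB hA h.symm i hpos ih.symm hiB hiA)
        · rw [List.getElem?_eq_none (by omega), List.getElem?_eq_none (by omega)]
      rw [hopt]
  have hLL : A.sort (· ≤ ·) = B.sort (· ≤ ·) := by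
    have := key k
    rwa [List.take_of_length_le (by omega), List.take_of_length_le (by omega)] at this
  have hAB : (A.sort (· ≤ ·)).toFinset = (B.sort (· ≤ ·)).toFinset := by rw [hLL]
  rwa [Finset.sort_toFinset, Finset.sort_toFinset] at hAB

lemma code_card {k : ℕ} {A : Finset (List (Fin d))} (hA : Valid k A) :
    (code A).card = k - 1 := by
  rw [code, Finset.card_image_of_injOn, Finset.card_erase_of_mem hA.2.1, hA.1]
  intro a haa b hbb he
  obtain ⟨hane, haA⟩ := Finset.mem_erase.mp haa
  obtain ⟨hbne, hbA⟩ := Finset.mem_erase.mp hbb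
  have h1 : rk A a.dropLast = rk A b.dropLast := congrArg Prod.fst he
  have h2 : a.getLast? = b.getLast? := congrArg Prod.snd he
  have hpa : a.dropLast ∈ A := hA.2.2 a haA hane
  have hpb : b.dropLast ∈ A := hA.2.2 b hbA hbne
  have hdl : a.dropLast = b.dropLast := by
    rcases lt_trichotomy a.dropLast b.dropLast with hlt | heq | hgt
    · exact absurd h1 (ne_of_lt (rk_strictMono hpa hlt))
    · exact heq
    · exact absurd h1.symm (ne_of_lt (rk_strictMono hpb hgt))
  rw [← dropLast_append_toList hane, ← dropLast_append_toList hbne, hdl, h2]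

lemma code_subset {k : ℕ} {A : Finset (List (Fin d))} (hA : Valid k A) :
    code A ⊆ (Finset.range (k-1)) ×ˢ (Finset.univ.image (some : Fin d → Option (Fin d))) := by
  intro p hp
  obtain ⟨b, hb, hbe⟩ := Finset.mem_image.mp hp
  obtain ⟨hbne, hbA⟩ := Finset.mem_erase.mp hb
  subst hbe
  rw [Finset.mem_product]
  constructor
  · rw [Finset.mem_range]
    have h1 : rk A b.dropLast < rk A b := rk_strictMono (hA.2.2 b hbA hbne) (dropLast_lt hbne)
    have h2 : rk A b < k := by rw [← hA.1]; exact rk_lt_card hbA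
    omega
  · simp only [Finset.mem_image, Finset.mem_univ, true_and]
    obtain ⟨x, t, rfl⟩ := List.exists_cons_of_ne_nil hbne
    exact ⟨(x :: t).getLast (by simp), (List.getLast?_eq_getLast _).symm⟩

/-- counting valid address sets -/
lemma valid_count (d k : ℕ) :
    {A : Finset (List (Fin d)) | Valid k A}.ncard ≤ ((k-1) * d).choose (k-1) := by
  classical
  set T := (Finset.range (k-1)) ×ˢ (Finset.univ.image (some : Fin d → Option (Fin d)))
    with hT
  have hTcard : T.card = (k-1) * d := by
    rw [hT, Finset.card_product, Finset.card_range,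
      Finset.card_image_of_injective _ (Option.some_injective _), Finset.card_univ,
      Fintype.card_fin]
  have hle : {A : Finset (List (Fin d)) | Valid k A}.ncard ≤
      ((Finset.powersetCard (k-1) T : Finset (Finset (ℕ × Option (Fin d)))) : Set (Finset (ℕ × Option (Fin d)))).ncard := by
    refine Set.ncard_le_ncard_of_injOn code ?_ ?_ (Finset.finite_toSet _)
    · intro A hA
      simp only [Finset.coe_sort_coe, Finset.mem_coe, Finset.mem_powersetCard]
      exact ⟨code_subset hA, code_card hA⟩
    · intro A hA B hB hc
      exact code_inj hA hB hc
  rwa [Set.ncard_coe_finset, Finset.card_powersetCard, hTcard] at hle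

lemma valid_finite (d k : ℕ) : {A : Finset (List (Fin d)) | Valid k A}.Finite := by
  classical
  refine Set.Finite.of_finite_image (f := code) ?_ (fun A hA B hB h => code_inj hA hB h)
  refine Set.Finite.subset (Finset.finite_toSet
    (Finset.powersetCard (k-1)
      ((Finset.range (k-1)) ×ˢ (Finset.univ.image (some : Fin d → Option (Fin d)))))) ?_
  rintro _ ⟨A, hA, rfl⟩
  rw [Finset.mem_coe, Finset.mem_powersetCard]
  exact ⟨code_subset hA, code_card hA⟩

end code


/-- the binomial bound -/
lemma choose_le_exp (m d : ℕ) : ((m * d).choose m : ℝ) ≤ (Real.exp 1 * d) ^ m := by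
  have hfac : (0:ℝ) < (m.factorial : ℝ) := by positivity
  have h1 : ((m * d).choose m : ℝ) * (m.factorial : ℝ) ≤ ((m:ℝ) * d) ^ m := by
    have := Nat.descFactorial_le_pow (m * d) m
    rw [Nat.descFactorial_eq_factorial_mul_choose] at this
    calc ((m * d).choose m : ℝ) * (m.factorial : ℝ)
        = ((m.factorial * (m * d).choose m : ℕ) : ℝ) := by push_cast; ring
      _ ≤ (((m * d) ^ m : ℕ) : ℝ) := by exact_mod_cast this
      _ = ((m:ℝ) * d) ^ m := by push_cast; ring
  have h2 : ((m:ℝ)) ^ m ≤ Real.exp 1 ^ m * (m.factorial : ℝ) := by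
    have hs := Real.sum_le_exp_of_nonneg (x := (m:ℝ)) (by positivity) (m + 1)
    have hterm : ((m:ℝ)) ^ m / (m.factorial : ℝ) ≤ Real.exp m := by
      refine le_trans ?_ hs
      have : ((m:ℝ)) ^ m / (m.factorial : ℝ) =
          (fun i => ((m:ℝ)) ^ i / (i.factorial : ℝ)) m := rfl
      rw [this]
      refine Finset.single_le_sum (f := fun i => ((m:ℝ)) ^ i / (i.factorial : ℝ)) ?_ ?_
      · intro i _; positivity
      · exact Finset.self_mem_range_succ m
    have hexp : Real.exp (m : ℝ) = Real.exp 1 ^ m := by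
      rw [← Real.exp_nat_mul]; norm_num
    rw [div_le_iff₀ hfac] at hterm
    rw [← hexp]
    exact hterm
  have h3 : ((m:ℝ) * d) ^ m ≤ (Real.exp 1 ^ m * (m.factorial : ℝ)) * (d:ℝ) ^ m := by
    rw [mul_pow]
    exact mul_le_mul_of_nonneg_right h2 (by positivity)
  have := h1.trans h3
  rw [mul_pow]
  calc ((m * d).choose m : ℝ)
      = ((m * d).choose m : ℝ) * (m.factorial : ℝ) / (m.factorial : ℝ) := by
        field_simp
    _ ≤ (Real.exp 1 ^ m * (m.factorial : ℝ)) * (d:ℝ) ^ m / (m.factorial : ℝ) := by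
        gcongr
    _ = Real.exp 1 ^ m * (d:ℝ) ^ m := by field_simp

section Graph
open SimpleGraph
open scoped Classical

variable {V : Type*} {d : ℕ} {G : SimpleGraph V}

/-- the unique path from `x` to the root `r` in a subtree -/
noncomputable def pp (H : G.Subgraph) (hT : H.coe.IsTree) (r x : ↑H.verts) :
    H.coe.Walk x r := (hT.existsUnique_path x r).choose

lemma pp_isPath (H : G.Subgraph) (hT : H.coe.IsTree) (r x : ↑H.verts) :
    (pp H hT r x).IsPath := (hT.existsUnique_path x r).choose_spec.1

lemma pp_unique (H : G.Subgraph) (hT : H.coe.IsTree) (r x : ↑H.verts)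
    (q : H.coe.Walk x r) (hq : q.IsPath) : q = pp H hT r x :=
  (hT.existsUnique_path x r).choose_spec.2 q hq

/-- the parent of a non-root vertex -/
noncomputable def par (H : G.Subgraph) (hT : H.coe.IsTree) (r : ↑H.verts) (x : ↑H.verts) :
    ↑H.verts := (pp H hT r x).getVert 1

lemma adj_par (H : G.Subgraph) (hT : H.coe.IsTree) (r : ↑H.verts) {x : ↑H.verts}
    (hx : x ≠ r) : H.coe.Adj x (par H hT r x) :=
  SimpleGraph.Walk.adj_snd (SimpleGraph.Walk.not_nil_of_ne hx)

lemma pp_par (H : G.Subgraph) (hT : H.coe.IsTree) (r : ↑H.verts) {x : ↑H.verts}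
    (hx : x ≠ r) : pp H hT r (par H hT r x) = (pp H hT r x).tail :=
  (pp_unique H hT r _ ((pp H hT r x).tail)
    ((pp_isPath H hT r x).tail)).symm

lemma depth_par (H : G.Subgraph) (hT : H.coe.IsTree) (r : ↑H.verts) {x : ↑H.verts}
    (hx : x ≠ r) : (pp H hT r (par H hT r x)).length < (pp H hT r x).length := by
  rw [pp_par H hT r hx]
  have := SimpleGraph.Walk.length_tail_add_one (p := pp H hT r x)
    (SimpleGraph.Walk.not_nil_of_ne hx)
  exact Nat.lt_of_lt_of_eq (Nat.lt_succ_self _) this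

lemma mem_nbr_par (H : G.Subgraph) (hT : H.coe.IsTree) (r : ↑H.verts) {x : ↑H.verts}
    (hx : x ≠ r) : (x : V) ∈ G.neighborSet ((par H hT r x : ↑H.verts) : V) := by
  have h := adj_par H hT r hx
  rw [SimpleGraph.Subgraph.coe_adj] at h
  exact (h.adj_sub).symm

/-- address of a vertex: slot-sequence along the path from the root -/
noncomputable def addr (σ : ∀ w : V, G.neighborSet w ↪ Fin d) (H : G.Subgraph)
    (hT : H.coe.IsTree) (r : ↑H.verts) (x : ↑H.verts) : List (Fin d) :=
  if hx : x = r then [] else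
    (addr σ H hT r (par H hT r x)) ++
      [σ ((par H hT r x : ↑H.verts) : V) ⟨(x : V), mem_nbr_par H hT r hx⟩]
termination_by (pp H hT r x).length
decreasing_by exact depth_par H hT r hx

lemma addr_r (σ : ∀ w : V, G.neighborSet w ↪ Fin d) (H : G.Subgraph)
    (hT : H.coe.IsTree) (r : ↑H.verts) : addr σ H hT r r = [] := by
  rw [addr]; simp

lemma addr_ne (σ : ∀ w : V, G.neighborSet w ↪ Fin d) (H : G.Subgraph)
    (hT : H.coe.IsTree) (r : ↑H.verts) {x : ↑H.verts} (hx : x ≠ r) :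
    addr σ H hT r x = (addr σ H hT r (par H hT r x)) ++
      [σ ((par H hT r x : ↑H.verts) : V) ⟨(x : V), mem_nbr_par H hT r hx⟩] := by
  rw [addr]; simp [hx]

lemma addr_eq_nil_iff (σ : ∀ w : V, G.neighborSet w ↪ Fin d) (H : G.Subgraph)
    (hT : H.coe.IsTree) (r : ↑H.verts) {x : ↑H.verts} :
    addr σ H hT r x = [] ↔ x = r := by
  constructor
  · intro h
    by_contra hx
    rw [addr_ne σ H hT r hx] at h
    simp at h
  · rintro rfl; exact addr_r σ H hT _

/-- partial inverse of the slot function -/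
noncomputable def invN (σ : ∀ w : V, G.neighborSet w ↪ Fin d) (u : V) (s : Fin d) :
    Option V :=
  if h : ∃ x : G.neighborSet u, σ u x = s then some (h.choose : V) else none

lemma invN_σ (σ : ∀ w : V, G.neighborSet w ↪ Fin d) (u : V) (x : G.neighborSet u) :
    invN σ u (σ u x) = some (x : V) := by
  rw [invN, dif_pos ⟨x, rfl⟩]
  congr 1
  have h : ∃ y : G.neighborSet u, σ u y = σ u x := ⟨x, rfl⟩
  have := h.choose_spec
  exact congrArg Subtype.val ((σ u).injective this)

/-- decoder (on reversed lists) -/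
noncomputable def decR (σ : ∀ w : V, G.neighborSet w ↪ Fin d) (v : V) :
    List (Fin d) → Option V
  | [] => some v
  | s :: t => (decR σ v t).bind fun u => invN σ u s

/-- decoder -/
noncomputable def dec (σ : ∀ w : V, G.neighborSet w ↪ Fin d) (v : V) (l : List (Fin d)) :
    Option V := decR σ v l.reverse

lemma dec_nil (σ : ∀ w : V, G.neighborSet w ↪ Fin d) (v : V) : dec σ v [] = some v := rfl

lemma dec_append (σ : ∀ w : V, G.neighborSet w ↪ Fin d) (v : V) (l : List (Fin d))
    (s : Fin d) : dec σ v (l ++ [s]) = (dec σ v l).bind fun u => invN σ u s := by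
  rw [dec, dec, List.reverse_append]
  rfl

lemma dec_addr (σ : ∀ w : V, G.neighborSet w ↪ Fin d) (H : G.Subgraph)
    (hT : H.coe.IsTree) (r : ↑H.verts) {v : V} (hr : (r : V) = v) (x : ↑H.verts) :
    dec σ v (addr σ H hT r x) = some (x : V) := by
  have main : ∀ n x, (pp H hT r x).length ≤ n →
      dec σ v (addr σ H hT r x) = some ((x : ↑H.verts) : V) := by
    intro n
    induction n with
    | zero =>
      intro x hlen
      have hx : x = r := SimpleGraph.Walk.eq_of_length_eq_zero (Nat.le_zero.mp hlen)
      subst hx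
      rw [addr_r, dec_nil, hr]
    | succ n ih =>
      intro x hlen
      by_cases hx : x = r
      · subst hx; rw [addr_r, dec_nil, hr]
      · rw [addr_ne σ H hT r hx, dec_append]
        have hp : dec σ v (addr σ H hT r (par H hT r x)) =
            some ((par H hT r x : ↑H.verts) : V) := by
          refine ih _ ?_
          have := depth_par H hT r hx
          omega
        rw [hp, Option.bind_some]
        exact invN_σ σ _ _
  exact main (pp H hT r x).length x le_rfl

lemma addr_inj (σ : ∀ w : V, G.neighborSet w ↪ Fin d) (H : G.Subgraph)
    (hT : H.coe.IsTree) (r : ↑H.verts) : Function.Injective (addr σ H hT r) := by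
  intro x y he
  have h1 := dec_addr σ H hT r rfl x
  have h2 := dec_addr σ H hT r rfl y
  rw [he, h2] at h1
  exact Subtype.ext (Option.some_injective _ h1).symm

/-- adjacency in a tree means parent relation -/
lemma adj_par_cases (H : G.Subgraph) (hT : H.coe.IsTree) (r : ↑H.verts)
    {x y : ↑H.verts} (hxy : H.coe.Adj x y) :
    (∃ hx : x ≠ r, par H hT r x = y) ∨ (∃ hy : y ≠ r, par H hT r y = x) := by
  by_cases hys : y ∈ (pp H hT r x).support
  · -- y on the path from x to r: parent of x is y
    left
    have hx : x ≠ r := by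
      intro hxr
      have hnil : pp H hT r r = SimpleGraph.Walk.nil :=
        SimpleGraph.Walk.isPath_iff_eq_nil.mp (pp_isPath H hT r r)
      have hys' := hys
      rw [hxr, hnil, SimpleGraph.Walk.support_nil] at hys'
      simp at hys'
      exact hxy.ne (hxr.trans hys'.symm)
    refine ⟨hx, ?_⟩
    have hq1 : ((pp H hT r x).takeUntil y hys).IsPath :=
      (pp_isPath H hT r x).takeUntil hys
    have he : (SimpleGraph.Walk.cons hxy SimpleGraph.Walk.nil).IsPath := by
      rw [SimpleGraph.Walk.cons_isPath_iff]
      refine ⟨SimpleGraph.Walk.IsPath.nil, ?_⟩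
      rw [SimpleGraph.Walk.support_nil]
      simp [hxy.ne]
    have huniq : ((pp H hT r x).takeUntil y hys) =
        (SimpleGraph.Walk.cons hxy SimpleGraph.Walk.nil) := by
      have := hT.IsAcyclic.path_unique
        ⟨(pp H hT r x).takeUntil y hys, hq1⟩ ⟨_, he⟩
      exact congrArg Subtype.val this
    have hspec := (pp H hT r x).take_spec hys
    rw [huniq, SimpleGraph.Walk.cons_append, SimpleGraph.Walk.nil_append] at hspec
    rw [par, ← hspec]; exact SimpleGraph.Walk.snd_cons _ _
  · -- y not on path: parent of y is x
    right
    have hy : y ≠ r := by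
      intro hyr
      rw [hyr] at hys
      exact hys ((pp H hT r x).end_mem_support)
    refine ⟨hy, ?_⟩
    have hW : (SimpleGraph.Walk.cons hxy.symm (pp H hT r x)).IsPath := by
      rw [SimpleGraph.Walk.cons_isPath_iff]
      exact ⟨pp_isPath H hT r x, hys⟩
    have := pp_unique H hT r y _ hW
    rw [par, ← this]; exact SimpleGraph.Walk.snd_cons _ _

/-- the address set of a subtree -/
noncomputable def AH [Fintype V] (σ : ∀ w : V, G.neighborSet w ↪ Fin d) (H : G.Subgraph)
    (hT : H.coe.IsTree) (r : ↑H.verts) : Finset (List (Fin d)) :=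
  letI : Fintype ↑H.verts := Set.Finite.fintype (Set.toFinite _)
  (Finset.univ : Finset ↑H.verts).image (addr σ H hT r)

lemma mem_AH [Fintype V] (σ : ∀ w : V, G.neighborSet w ↪ Fin d) (H : G.Subgraph)
    (hT : H.coe.IsTree) (r : ↑H.verts) (a : List (Fin d)) :
    a ∈ AH σ H hT r ↔ ∃ x : ↑H.verts, addr σ H hT r x = a := by
  rw [AH]
  simp

lemma AH_valid [Fintype V] (σ : ∀ w : V, G.neighborSet w ↪ Fin d) (H : G.Subgraph)
    (hT : H.coe.IsTree) (r : ↑H.verts) {k : ℕ} (hk : H.verts.ncard = k) :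
    Valid k (AH σ H hT r) := by
  refine ⟨?_, ?_, ?_⟩
  · rw [AH]
    letI : Fintype ↑H.verts := Set.Finite.fintype (Set.toFinite _)
    rw [Finset.card_image_of_injective _ (addr_inj σ H hT r), Finset.card_univ]
    rw [← hk, ← Nat.card_coe_set_eq, Nat.card_eq_fintype_card]
  · rw [mem_AH]
    exact ⟨r, addr_r σ H hT r⟩
  · intro a ha hane
    rw [mem_AH] at ha ⊢
    obtain ⟨x, rfl⟩ := ha
    have hx : x ≠ r := by
      intro h; subst h; rw [addr_r] at hane; exact hane rfl
    refine ⟨par H hT r x, ?_⟩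
    rw [addr_ne σ H hT r hx, List.dropLast_concat]

/-- membership in verts is determined by the address set -/
lemma verts_eq_AH [Fintype V] (σ : ∀ w : V, G.neighborSet w ↪ Fin d) (H : G.Subgraph)
    (hT : H.coe.IsTree) (r : ↑H.verts) {v : V} (hr : (r : V) = v) (x : V) :
    x ∈ H.verts ↔ ∃ a ∈ AH σ H hT r, dec σ v a = some x := by
  constructor
  · intro hx
    refine ⟨addr σ H hT r ⟨x, hx⟩, (mem_AH σ H hT r _).mpr ⟨⟨x, hx⟩, rfl⟩, ?_⟩
    exact dec_addr σ H hT r hr ⟨x, hx⟩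
  · rintro ⟨a, ha, hdec⟩
    obtain ⟨w, rfl⟩ := (mem_AH σ H hT r a).mp ha
    have := dec_addr σ H hT r hr w
    rw [this] at hdec
    have := Option.some_injective _ hdec
    rw [← this]
    exact w.2

/-- adjacency is determined by the address set -/
lemma adj_iff_AH [Fintype V] (σ : ∀ w : V, G.neighborSet w ↪ Fin d) (H : G.Subgraph)
    (hT : H.coe.IsTree) (r : ↑H.verts) {v : V} (hr : (r : V) = v) (x y : V) :
    H.Adj x y ↔ ∃ a ∈ AH σ H hT r, a ≠ [] ∧
      ((dec σ v a = some x ∧ dec σ v a.dropLast = some y) ∨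
       (dec σ v a = some y ∧ dec σ v a.dropLast = some x)) := by
  constructor
  · intro hxy
    have hxv : x ∈ H.verts := H.edge_vert hxy
    have hyv : y ∈ H.verts := H.edge_vert hxy.symm
    have hcoe : H.coe.Adj ⟨x, hxv⟩ ⟨y, hyv⟩ := by
      rw [SimpleGraph.Subgraph.coe_adj]; exact hxy
    rcases adj_par_cases H hT r hcoe with ⟨hx, hpar⟩ | ⟨hy, hpar⟩
    · refine ⟨addr σ H hT r ⟨x, hxv⟩, (mem_AH σ H hT r _).mpr ⟨_, rfl⟩, ?_, Or.inl ⟨?_, ?_⟩⟩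
      · rw [Ne, addr_eq_nil_iff]; exact hx
      · exact dec_addr σ H hT r hr _
      · rw [addr_ne σ H hT r hx, List.dropLast_concat, hpar]
        exact dec_addr σ H hT r hr _
    · refine ⟨addr σ H hT r ⟨y, hyv⟩, (mem_AH σ H hT r _).mpr ⟨_, rfl⟩, ?_, Or.inr ⟨?_, ?_⟩⟩
      · rw [Ne, addr_eq_nil_iff]; exact hy
      · exact dec_addr σ H hT r hr _
      · rw [addr_ne σ H hT r hy, List.dropLast_concat, hpar]
        exact dec_addr σ H hT r hr _
  · rintro ⟨a, ha, hane, hcase⟩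
    obtain ⟨w, rfl⟩ := (mem_AH σ H hT r a).mp ha
    have hw : w ≠ r := by
      intro h; subst h; rw [addr_r] at hane; exact hane rfl
    have hdw := dec_addr σ H hT r hr w
    have hdp : dec σ v (addr σ H hT r w).dropLast =
        some ((par H hT r w : ↑H.verts) : V) := by
      rw [addr_ne σ H hT r hw, List.dropLast_concat]
      exact dec_addr σ H hT r hr _
    have hadj : H.Adj (w : V) ((par H hT r w : ↑H.verts) : V) := by
      have := adj_par H hT r hw
      rwa [SimpleGraph.Subgraph.coe_adj] at this
    rcases hcase with ⟨h1, h2⟩ | ⟨h1, h2⟩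
    · rw [hdw] at h1; rw [hdp] at h2
      have hx := Option.some_injective _ h1
      have hy := Option.some_injective _ h2
      rw [← hx, ← hy]; exact hadj
    · rw [hdw] at h1; rw [hdp] at h2
      have hx := Option.some_injective _ h2
      have hy := Option.some_injective _ h1
      rw [← hx, ← hy]; exact hadj.symm

end Graph

end TreeCountAux


open TreeCountAux

/-- Lemma 1: in a graph of maximum degree at most `d`, the number of subtrees on exactly
`k` vertices containing a fixed vertex `v` is at most `(e·d)^(k-1)`. -/
theorem tree_count_le {V : Type*} [Fintype V] (G : SimpleGraph V) (d k : ℕ) (hk : 0 < k)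
    (hdeg : ∀ w : V, (G.neighborSet w).ncard ≤ d) (v : V) :
    (({H : G.Subgraph | H.coe.IsTree ∧ H.verts.ncard = k ∧ v ∈ H.verts}).ncard : ℝ) ≤
      (Real.exp 1 * d) ^ (k - 1) := by
  classical
  have hσ : ∀ w : V, Nonempty (G.neighborSet w ↪ Fin d) := by
    intro w
    haveI : Fintype (G.neighborSet w) := Set.Finite.fintype (Set.toFinite _)
    rw [Function.Embedding.nonempty_iff_card_le, Fintype.card_fin]
    have h := hdeg w
    rwa [← Nat.card_coe_set_eq, Nat.card_eq_fintype_card] at h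
  let σ : ∀ w : V, G.neighborSet w ↪ Fin d := fun w => (hσ w).some
  set S := {H : G.Subgraph | H.coe.IsTree ∧ H.verts.ncard = k ∧ v ∈ H.verts} with hS
  let Φ : G.Subgraph → Finset (List (Fin d)) := fun H =>
    if h : H.coe.IsTree ∧ v ∈ H.verts then AH σ H h.1 ⟨v, h.2⟩ else ∅
  have hΦ : ∀ (H : G.Subgraph) (h1 : H.coe.IsTree) (h3 : v ∈ H.verts),
      Φ H = AH σ H h1 ⟨v, h3⟩ := by
    intro H h1 h3
    simp only [Φ]
    rw [dif_pos ⟨h1, h3⟩]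
  have hmaps : ∀ H ∈ S, Φ H ∈ {A : Finset (List (Fin d)) | Valid k A} := by
    intro H hH
    obtain ⟨h1, h2, h3⟩ := hH
    rw [hΦ H h1 h3]
    exact AH_valid σ H h1 _ h2
  have hinj : Set.InjOn Φ S := by
    intro H1 hH1 H2 hH2 he
    obtain ⟨t1, c1, m1⟩ := hH1
    obtain ⟨t2, c2, m2⟩ := hH2
    rw [hΦ H1 t1 m1, hΦ H2 t2 m2] at he
    have hverts : H1.verts = H2.verts := by
      ext x
      rw [verts_eq_AH σ H1 t1 ⟨v, m1⟩ rfl x, verts_eq_AH σ H2 t2 ⟨v, m2⟩ rfl x, he]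
    refine SimpleGraph.Subgraph.ext hverts ?_
    ext x y
    rw [adj_iff_AH σ H1 t1 ⟨v, m1⟩ rfl x y, adj_iff_AH σ H2 t2 ⟨v, m2⟩ rfl x y, he]
  have h1 : S.ncard ≤ {A : Finset (List (Fin d)) | Valid k A}.ncard :=
    Set.ncard_le_ncard_of_injOn Φ hmaps hinj (valid_finite d k)
  have h2 := valid_count d k
  have h3 := choose_le_exp (k-1) d
  calc (S.ncard : ℝ) ≤ ((((k-1) * d).choose (k-1) : ℕ) : ℝ) := by
        exact_mod_cast le_trans h1 h2
    _ ≤ (Real.exp 1 * ↑d) ^ (k-1) := h3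

end
end

section
/- Let G be a graph of maximum degree at most d, let k > 0 be an integer, and let v be a vertex of G. Then the number of subtrees of G on exactly k vertices that contain v is at most k^{k−2} · d^{k−1} / (k−1)!. -/
open MeasureTheory

noncomputable section

section Aux

open SimpleGraph

variable {W : Type} [Fintype W]

lemma ncard_nbr (T : SimpleGraph W) (z : W) [DecidableRel T.Adj] :
    (T.neighborSet z).ncard = T.degree z := by
  rw [Set.ncard_eq_toFinset_card', Set.toFinset_card, card_neighborSet_eq_degree]

lemma one_le_deg (T : SimpleGraph W) (hc : T.Connected) (h2 : 2 ≤ Fintype.card W) (z : W) :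
    1 ≤ (T.neighborSet z).ncard := by
  obtain ⟨w, hw⟩ := Fintype.exists_ne_of_one_lt_card (by omega) z
  obtain ⟨p⟩ := hc z w
  cases p with
  | nil => exact absurd rfl hw
  | cons h q => exact (Set.ncard_pos (Set.toFinite _)).2 ⟨_, h⟩

-- leaf existence in a tree with ≥ 2 vertices
lemma exists_leaf (T : SimpleGraph W) (hT : T.IsTree) (h2 : 2 ≤ Fintype.card W) :
    ∃ x, (T.neighborSet x).ncard = 1 := by
  classical
  by_contra h
  push_neg at h
  have hge : ∀ z, 2 ≤ T.degree z := by
    intro z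
    have h1 := one_le_deg T hT.isConnected h2 z
    have := h z
    rw [ncard_nbr] at *
    omega
  have hsum := T.sum_degrees_eq_twice_card_edges
  have hcard := hT.card_edgeFinset
  have : 2 * Fintype.card W ≤ ∑ v, T.degree v := by
    calc 2 * Fintype.card W = ∑ _v : W, 2 := by simp [mul_comm]
    _ ≤ ∑ v, T.degree v := Finset.sum_le_sum (fun i _ => hge i)
  omega

-- internal vertex of a path has degree ≥ 2
lemma internal_deg {T : SimpleGraph W} {u w : W} (p : T.Walk u w) (hp : p.IsPath)
    {x : W} (hx : x ∈ p.support) (hu : x ≠ u) (hw : x ≠ w) :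
    2 ≤ (T.neighborSet x).ncard := by
  induction p with
  | nil => simp at hx; exact absurd hx hu
  | @cons a b c h q ih =>
    rw [SimpleGraph.Walk.support_cons, List.mem_cons] at hx
    rcases hx with rfl | hx
    · exact absurd rfl hu
    · rcases eq_or_ne x b with rfl | hxb
      · -- x = b, second vertex; q : Walk x c; x ≠ c so q = cons
        cases q with
        | nil => exact absurd rfl hw
        | @cons _ e _ h2 q2 =>
          have hnd := hp.support_nodup
          rw [SimpleGraph.Walk.support_cons, SimpleGraph.Walk.support_cons] at hnd
          have hae : a ≠ e := by
            intro hae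
            apply (List.nodup_cons.1 hnd).1
            rw [hae]
            exact List.mem_cons_of_mem _ q2.start_mem_support
          exact (Set.one_lt_ncard_iff (Set.toFinite _)).2 ⟨a, e, h.symm, h2, hae⟩
      · exact ih (hp.of_cons) hx hxb hw

-- unique tree on a 2-element type
lemma tree_two (T : SimpleGraph W) (hT : T.IsTree) (h2 : Fintype.card W = 2)
    {a b : W} (hab : a ≠ b) : T.Adj a b := by
  obtain ⟨p⟩ := hT.isConnected a b
  cases p with
  | nil => exact absurd rfl hab
  | @cons _ u _ h q =>
    have hu : u = b := by
      by_contra hub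
      have := Fintype.card_le_of_injective (fun i : Fin 3 => if i = 0 then a else if i = 1 then u else b) ?_
      · rw [Fintype.card_fin] at this; omega
      · intro i j hij
        fin_cases i <;> fin_cases j <;> simp_all <;> first
          | rfl
          | (exact absurd hij (by tauto))
          | (exact absurd hij.symm (by tauto))
    exact hu ▸ h

lemma tree_two_unique (T T' : SimpleGraph W) (hT : T.IsTree) (hT' : T'.IsTree)
    (h2 : Fintype.card W = 2) : T = T' := by
  ext a b
  constructor
  · intro h; exact tree_two T' hT' h2 h.ne
  · intro h; exact tree_two T hT h2 h.ne

-- lift a walk avoiding the complement of s to the induced graph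
lemma lift_walk {T : SimpleGraph W} {s : Set W} :
    ∀ {u w : W} (p : T.Walk u w) (_ : ∀ z ∈ p.support, z ∈ s)
      (hu : u ∈ s) (hw : w ∈ s),
      (T.induce s).Reachable ⟨u, hu⟩ ⟨w, hw⟩ := by
  intro u w p
  induction p with
  | nil => intro _ hu hw; rfl
  | @cons a b c h q ih =>
    intro hs hu hw
    have hb : b ∈ s := hs b (by simp)
    have h1 : (T.induce s).Adj ⟨a, hu⟩ ⟨b, hb⟩ := by
      simp [h]
    exact h1.reachable.trans (ih (fun z hz => hs z (by simp [hz])) hb hw)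

-- the neighbor set ncard in an induced subgraph
lemma induce_nbr_ncard (T : SimpleGraph W) (s : Set W) (a : ↥s) :
    ((T.induce s).neighborSet a).ncard = (T.neighborSet ↑a ∩ s).ncard := by
  have : (T.neighborSet ↑a ∩ s) = Subtype.val '' ((T.induce s).neighborSet a) := by
    ext z
    simp only [Set.mem_inter_iff, mem_neighborSet, Set.mem_image]
    constructor
    · rintro ⟨hz, hzs⟩
      exact ⟨⟨z, hzs⟩, by simpa using hz, rfl⟩
    · rintro ⟨⟨z', hz'⟩, hadj, rfl⟩
      refine ⟨by simpa using hadj, hz'⟩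
  rw [this, Set.ncard_image_of_injective _ Subtype.val_injective]

-- neighbor of a leaf has degree ≥ 2 when there are ≥ 3 vertices
lemma leaf_nbr_deg (T : SimpleGraph W) (hc : T.Connected) (h3 : 3 ≤ Fintype.card W)
    {x y : W} (hxy : T.neighborSet x = {y}) : 2 ≤ (T.neighborSet y).ncard := by
  classical
  have hadjxy : T.Adj x y := by
    have : y ∈ T.neighborSet x := by rw [hxy]; rfl
    exact this
  -- find z ∉ {x, y}
  obtain ⟨z, hz⟩ : ∃ z : W, z ∉ ({x, y} : Finset W) := by
    by_contra hno
    push_neg at hno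
    have := Finset.card_le_card (fun t _ => hno t : (Finset.univ : Finset W) ⊆ {x, y})
    have h2 : ({x, y} : Finset W).card ≤ 2 := Finset.card_insert_le _ _ |>.trans (by simp)
    rw [Finset.card_univ] at this
    omega
  simp only [Finset.mem_insert, Finset.mem_singleton, not_or] at hz
  obtain ⟨hzx, hzy⟩ := hz
  obtain ⟨p, hp⟩ : ∃ p : T.Walk x z, p.IsPath := ⟨(hc x z).some.toPath, (hc x z).some.toPath.2⟩
  cases p with
  | nil => exact absurd rfl (Ne.symm hzx)
  | @cons _ u _ h q =>
    have hu : u = y := by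
      have : u ∈ T.neighborSet x := h
      rwa [hxy, Set.mem_singleton_iff] at this
    subst hu
    cases q with
    | nil => exact absurd rfl (Ne.symm hzy)
    | @cons _ e _ h2 q2 =>
      have hnd := hp.support_nodup
      rw [Walk.support_cons, Walk.support_cons] at hnd
      have hxe : x ≠ e := by
        intro hxe
        apply (List.nodup_cons.1 hnd).1
        rw [hxe]
        exact List.mem_cons_of_mem _ q2.start_mem_support
      exact (Set.one_lt_ncard_iff (Set.toFinite _)).2 ⟨x, e, hadjxy.symm, h2, hxe⟩

-- induced subgraph of an acyclic graph is acyclic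
lemma induce_acyclic {T : SimpleGraph W} (h : T.IsAcyclic) (s : Set W) :
    (T.induce s).IsAcyclic := by
  intro v c hc
  exact h (c.map (SimpleGraph.Embedding.induce (G := T) s).toHom)
    (hc.map (SimpleGraph.Embedding.induce (G := T) s).injective)

-- removing a leaf from a tree yields a tree
lemma leaf_removal {T : SimpleGraph W} (hT : T.IsTree) {x y : W}
    (hxy : T.neighborSet x = {y}) (h3 : 3 ≤ Fintype.card W) :
    (T.induce {z : W | z ≠ x}).IsTree := by
  classical
  constructor
  · -- connected
    rw [connected_iff]
    constructor
    · intro u w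
      obtain ⟨p, hp⟩ : ∃ p : T.Walk ↑u ↑w, p.IsPath :=
        ⟨(hT.isConnected ↑u ↑w).some.toPath, (hT.isConnected ↑u ↑w).some.toPath.2⟩
      have hxs : x ∉ p.support := by
        intro hxp
        rcases eq_or_ne x ↑u with hh | hxu
        · exact u.2 hh.symm
        rcases eq_or_ne x ↑w with hh | hxw
        · exact w.2 hh.symm
        have := internal_deg p hp hxp hxu hxw
        rw [hxy, Set.ncard_singleton] at this
        omega
      have := lift_walk p (fun z hz => by
        simp only [Set.mem_setOf_eq]
        rintro rfl
        exact hxs hz) u.2 w.2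
      simpa using this
    · -- nonempty
      obtain ⟨z, hz⟩ := Fintype.exists_ne_of_one_lt_card (by omega) x
      exact ⟨⟨z, hz⟩⟩
  · exact induce_acyclic hT.IsAcyclic _

-- a tree is determined by a leaf, its neighbor, and the rest
lemma reconstruct (T T' : SimpleGraph W) (x y : W)
    (h1 : T.neighborSet x = {y}) (h1' : T'.neighborSet x = {y})
    (hind : T.induce {z : W | z ≠ x} = T'.induce {z : W | z ≠ x}) : T = T' := by
  have key : ∀ (S S' : SimpleGraph W), S.neighborSet x = {y} → S'.neighborSet x = {y} →
      S.induce {z : W | z ≠ x} = S'.induce {z : W | z ≠ x} →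
      ∀ a b, S.Adj a b → S'.Adj a b := by
    intro S S' hS hS' hSind a b hab
    rcases eq_or_ne a x with rfl | hax
    · have : b ∈ S.neighborSet a := hab
      rw [hS, Set.mem_singleton_iff] at this
      subst this
      have : b ∈ S'.neighborSet a := by rw [hS']; rfl
      exact this
    · rcases eq_or_ne b x with rfl | hbx
      · have : a ∈ S.neighborSet b := hab.symm
        rw [hS, Set.mem_singleton_iff] at this
        subst this
        have : a ∈ S'.neighborSet b := by rw [hS']; rfl
        exact this.symm
      · have h2 : (S.induce {z : W | z ≠ x}).Adj ⟨a, hax⟩ ⟨b, hbx⟩ := by simp [hab]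
        rw [hSind] at h2
        simpa using h2
  ext a b
  exact ⟨key T T' h1 h1' hind a b, key T' T h1' h1 hind.symm a b⟩

lemma card_ge_three {a b c : W} (hab : a ≠ b) (hac : a ≠ c) (hbc : b ≠ c) :
    3 ≤ Fintype.card W := by
  classical
  have := Fintype.card_le_of_injective
    (fun i : Fin 3 => if i = 0 then a else if i = 1 then b else c) ?_
  · rw [Fintype.card_fin] at this; omega
  · intro i j hij
    fin_cases i <;> fin_cases j <;> simp_all

lemma prufer (n : ℕ) : ∀ (W : Type) [Fintype W] [LinearOrder W], 2 ≤ n →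
    Fintype.card W = n →
    ∃ enc : {T : SimpleGraph W // T.IsTree} → List W,
      (∀ T, (enc T).length + 2 = n) ∧
      (∀ T z, z ∈ enc T ↔ 2 ≤ ((T : SimpleGraph W).neighborSet z).ncard) ∧
      Function.Injective enc := by
  induction n using Nat.strong_induction_on with
  | _ n IH =>
    intro W _ _ h2 hcard
    rcases eq_or_lt_of_le h2 with h2' | h3
    · -- n = 2
      refine ⟨fun _ => [], fun T => by simp; omega, ?_, ?_⟩
      · intro T z
        simp only [List.not_mem_nil, false_iff]
        intro hge
        obtain ⟨a, b, ha, hb, hab⟩ := (Set.one_lt_ncard_iff (Set.toFinite _)).1 hge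
        have h3 := card_ge_three hab (ha.ne' : a ≠ z) (hb.ne' : b ≠ z)
        omega
      · intro T T' _
        exact Subtype.ext (tree_two_unique _ _ T.2 T'.2 (by omega))
    · -- 3 ≤ n
      classical
      have hm2 : 2 ≤ n - 1 := by omega
      have hmlt : n - 1 < n := by omega
      have hEx : ∀ x : W,
          ∃ enc' : {T : SimpleGraph ↥{z : W | z ≠ x} // T.IsTree} → List ↥{z : W | z ≠ x},
            (∀ T, (enc' T).length + 2 = n - 1) ∧
            (∀ T z, z ∈ enc' T ↔
              2 ≤ ((T : SimpleGraph ↥{z : W | z ≠ x}).neighborSet z).ncard) ∧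
            Function.Injective enc' := by
        intro x
        apply IH (n - 1) hmlt _ hm2
        have : Fintype.card ↥{z : W | z ≠ x} = Fintype.card W - Fintype.card {z : W // z = x} :=
          Fintype.card_subtype_compl _
        rw [this, Fintype.card_subtype_eq, hcard]
      choose E hE1 hE2 hE3 using hEx
      -- canonical leaf data
      set TT := {T : SimpleGraph W // T.IsTree} with hTT
      have hlfne : ∀ T : TT,
          ((Set.toFinite {z | ((T : SimpleGraph W).neighborSet z).ncard ≤ 1}).toFinset).Nonempty := by
        intro T
        obtain ⟨x, hx⟩ := exists_leaf T.1 T.2 (by omega)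
        exact ⟨x, by simp only [Set.Finite.mem_toFinset]; exact hx.le⟩
      set xf : TT → W := fun T => Finset.max' _ (hlfne T) with hxf
      have hx1 : ∀ T : TT, ((T : SimpleGraph W).neighborSet (xf T)).ncard = 1 := by
        intro T
        have hmem : xf T ∈ (Set.toFinite {z | ((T : SimpleGraph W).neighborSet z).ncard ≤ 1}).toFinset := Finset.max'_mem _ (hlfne T)
        rw [Set.Finite.mem_toFinset] at hmem
        simp only [Set.mem_setOf_eq] at hmem
        have := one_le_deg T.1 T.2.isConnected (by omega) (xf T)
        omega
      have hy : ∀ T : TT, ∃ y, (T : SimpleGraph W).neighborSet (xf T) = {y} :=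
        fun T => Set.ncard_eq_one.1 (hx1 T)
      set yf : TT → W := fun T => (hy T).choose with hyf
      have hy1 : ∀ T : TT, (T : SimpleGraph W).neighborSet (xf T) = {yf T} :=
        fun T => (hy T).choose_spec
      have hadjxy : ∀ T : TT, (T : SimpleGraph W).Adj (xf T) (yf T) := by
        intro T
        have : yf T ∈ (T : SimpleGraph W).neighborSet (xf T) := by rw [hy1 T]; rfl
        exact this
      have hres : ∀ T : TT, ((T : SimpleGraph W).induce {z : W | z ≠ xf T}).IsTree :=
        fun T => leaf_removal T.2 (hy1 T) (by omega)
      set enc : TT → List W :=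
        fun T => yf T :: (E (xf T) ⟨_, hres T⟩).map Subtype.val with henc
      -- length
      have hlen : ∀ T, (enc T).length + 2 = n := by
        intro T
        have := hE1 (xf T) ⟨_, hres T⟩
        simp only [henc, List.length_cons, List.length_map]
        omega
      -- membership
      have hmem : ∀ (T : TT) z, z ∈ enc T ↔ 2 ≤ ((T : SimpleGraph W).neighborSet z).ncard := by
        intro T z
        rcases eq_or_ne z (xf T) with rfl | hzx
        · simp only [henc, List.mem_cons, List.mem_map]
          constructor
          · rintro (hzy | ⟨z', _, hz'⟩)
            · exact absurd (hzy ▸ (hadjxy T).ne) (by simp)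
            · exact absurd hz' z'.2
          · intro hge
            rw [hx1 T] at hge
            omega
        · have hmap : z ∈ enc T ↔ z = yf T ∨
              (⟨z, hzx⟩ : ↥{w : W | w ≠ xf T}) ∈ E (xf T) ⟨_, hres T⟩ := by
            simp only [henc, List.mem_cons, List.mem_map]
            constructor
            · rintro (h | ⟨z', hz', rfl⟩)
              · exact Or.inl h
              · exact Or.inr (by convert hz')
            · rintro (h | h)
              · exact Or.inl h
              · exact Or.inr ⟨_, h, rfl⟩
          rw [hmap, hE2 (xf T) ⟨_, hres T⟩ ⟨z, hzx⟩]
          rw [show ((⟨((T : SimpleGraph W).induce {w : W | w ≠ xf T}), hres T⟩ :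
            {S : SimpleGraph ↥{w : W | w ≠ xf T} // S.IsTree}) : SimpleGraph ↥{w : W | w ≠ xf T})
            = (T : SimpleGraph W).induce {w : W | w ≠ xf T} from rfl]
          rw [induce_nbr_ncard]
          rcases eq_or_ne z (yf T) with rfl | hzy
          · simp only [true_or, true_iff]
            exact leaf_nbr_deg T.1 T.2.isConnected (by omega) (hy1 T)
          · have hinter : (T : SimpleGraph W).neighborSet z ∩ {w : W | w ≠ xf T} =
                (T : SimpleGraph W).neighborSet z := by
              apply Set.inter_eq_self_of_subset_left
              intro w hw
              simp only [Set.mem_setOf_eq]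
              rintro rfl
              have hzw : (T : SimpleGraph W).Adj z (xf T) := hw
              have : z ∈ (T : SimpleGraph W).neighborSet (xf T) := hzw.symm
              rw [hy1 T, Set.mem_singleton_iff] at this
              exact hzy this
            rw [hinter]
            simp [hzy]
      -- injectivity
      have hinj : Function.Injective enc := by
        intro T T' h
        have hyy : yf T = yf T' := by
          have := congrArg List.head? h
          simpa [henc] using this
        have htail : (E (xf T) ⟨_, hres T⟩).map Subtype.val
            = (E (xf T') ⟨_, hres T'⟩).map Subtype.val := by
          have := congrArg List.tail h
          simpa [henc] using this
        have hlf : ∀ z : W, (((T : SimpleGraph W).neighborSet z).ncard ≤ 1) ↔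
            (((T' : SimpleGraph W).neighborSet z).ncard ≤ 1) := by
          intro z
          have hiff : 2 ≤ ((T : SimpleGraph W).neighborSet z).ncard ↔
              2 ≤ ((T' : SimpleGraph W).neighborSet z).ncard := by
            rw [← hmem T z, h, hmem T' z]
          constructor <;> intro hle <;> by_contra hgt
          · exact absurd (hiff.2 (by omega)) (by omega)
          · exact absurd (hiff.1 (by omega)) (by omega)
        have hlfset : ((Set.toFinite {z | ((T : SimpleGraph W).neighborSet z).ncard ≤ 1}).toFinset)
            = ((Set.toFinite {z | ((T' : SimpleGraph W).neighborSet z).ncard ≤ 1}).toFinset) := by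
          ext z
          simp only [Set.Finite.mem_toFinset, Set.mem_setOf_eq]
          exact hlf z
        have hxx : xf T = xf T' := by
          apply le_antisymm
          · exact Finset.le_max' _ _ (hlfset ▸ Finset.max'_mem _ (hlfne T))
          · exact Finset.le_max' _ _ (hlfset ▸ Finset.max'_mem _ (hlfne T'))
        -- transport
        have hcongr : ∀ (x x' : W) (_ : x = x') (S : SimpleGraph W)
            (p1 : (S.induce {z : W | z ≠ x}).IsTree) (p2 : (S.induce {z : W | z ≠ x'}).IsTree),
            (E x ⟨_, p1⟩).map Subtype.val = (E x' ⟨_, p2⟩).map Subtype.val := by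
          rintro x x' rfl S p1 p2; rfl
        have p2 : ((T' : SimpleGraph W).induce {z : W | z ≠ xf T}).IsTree := by
          rw [hxx]; exact hres T'
        have htail2 : (E (xf T) ⟨_, hres T⟩).map Subtype.val
            = (E (xf T) ⟨(T' : SimpleGraph W).induce {z : W | z ≠ xf T}, p2⟩).map Subtype.val :=
          htail.trans (hcongr (xf T') (xf T) hxx.symm (T' : SimpleGraph W) (hres T') p2)
        have hEeq := hE3 (xf T) ((List.map_injective_iff.2 Subtype.val_injective) htail2)
        have hindeq : (T : SimpleGraph W).induce {z : W | z ≠ xf T}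
            = (T' : SimpleGraph W).induce {z : W | z ≠ xf T} := congrArg Subtype.val hEeq
        have hy1' : (T' : SimpleGraph W).neighborSet (xf T) = {yf T} := by
          rw [hxx, hy1 T', hyy]
        exact Subtype.ext (reconstruct T.1 T'.1 (xf T) (yf T) (hy1 T) hy1' hindeq)
      exact ⟨enc, hlen, hmem, hinj⟩

lemma card_trees_le (k : ℕ) (hk : 0 < k) :
    Nat.card {T : SimpleGraph (Fin k) // T.IsTree} ≤ k ^ (k - 2) := by
  rcases eq_or_lt_of_le (show 1 ≤ k from hk) with h1 | h2
  · -- k = 1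
    have hsub : Subsingleton (SimpleGraph (Fin 1)) := by
      constructor
      intro T T'
      ext a b
      have : a = b := Subsingleton.elim a b
      subst this
      simp
    have : Subsingleton {T : SimpleGraph (Fin 1) // T.IsTree} :=
      ⟨fun T T' => Subtype.ext (Subsingleton.elim _ _)⟩
    rw [← h1]
    calc Nat.card {T : SimpleGraph (Fin 1) // T.IsTree} ≤ 1 :=
          Finite.card_le_one_iff_subsingleton.2 this
      _ ≤ 1 ^ (1 - 2) := by norm_num
  · -- k ≥ 2
    obtain ⟨enc, hlen, _, hinj⟩ := prufer k (Fin k) h2 (by simp)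
    have hglen : ∀ T, (enc T).length = k - 2 := fun T => by have := hlen T; omega
    set g : {T : SimpleGraph (Fin k) // T.IsTree} → (Fin (k - 2) → Fin k) :=
      fun T i => (enc T).get ⟨i, by rw [hglen T]; exact i.2⟩ with hg
    have hginj : Function.Injective g := by
      intro T T' hgg
      apply hinj
      apply List.ext_get (by rw [hglen T, hglen T'])
      intro i hi1 hi2
      have := congrFun hgg ⟨i, by rw [hglen T] at hi1; exact hi1⟩
      simpa [hg] using this
    calc Nat.card {T : SimpleGraph (Fin k) // T.IsTree}
        ≤ Nat.card (Fin (k - 2) → Fin k) := Nat.card_le_card_of_injective g hginj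
      _ = k ^ (k - 2) := by
          rw [Nat.card_eq_fintype_card, Fintype.card_fun]
          simp

section Embed

variable {V : Type*} [Fintype V] {G : SimpleGraph V} {d k : ℕ}

lemma embed_count (hk : 0 < k) (hdeg : ∀ w : V, (G.neighborSet w).ncard ≤ d) (v : V) :
    Nat.card {p : SimpleGraph (Fin k) × (Fin k → V) //
        p.1.IsTree ∧ p.2 ⟨0, hk⟩ = v ∧ ∀ i j, p.1.Adj i j → G.Adj (p.2 i) (p.2 j)} ≤
      Nat.card {T : SimpleGraph (Fin k) // T.IsTree} * d ^ (k - 1) := by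
  classical
  set r : Fin k := ⟨0, hk⟩ with hr
  -- neighbor indexing
  have J : ∀ w : V, G.neighborSet w ↪ Fin d := by
    intro w
    have hfin : (G.neighborSet w).Finite := Set.toFinite _
    have : Fintype (G.neighborSet w) := hfin.fintype
    have hcard : Fintype.card (G.neighborSet w) ≤ d := by
      have := hdeg w
      rwa [Set.ncard_eq_toFinset_card', Set.toFinset_card] at this
    exact Classical.choice (Function.Embedding.nonempty_of_card_le
      (by rw [Fintype.card_fin]; exact hcard))
  have hJcast : ∀ (w w' : V) (_ : w = w') (a : V) (ha : a ∈ G.neighborSet w)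
      (ha' : a ∈ G.neighborSet w'), J w ⟨a, ha⟩ = J w' ⟨a, ha'⟩ := by
    rintro w w' rfl a ha ha'; rfl
  -- unique paths to the root
  set TK := {T : SimpleGraph (Fin k) // T.IsTree} with hTK
  set pf : ∀ (T : TK) (i : Fin k), T.1.Walk i r := fun T i => (T.2.existsUnique_path i r).choose
    with hpf
  have hpf1 : ∀ (T : TK) (i : Fin k), (pf T i).IsPath :=
    fun T i => (T.2.existsUnique_path i r).choose_spec.1
  have hpf2 : ∀ (T : TK) (i : Fin k) (q : T.1.Walk i r), q.IsPath → q = pf T i :=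
    fun T i q hq => (T.2.existsUnique_path i r).choose_spec.2 q hq
  have hpar : ∀ (T : TK) (i : Fin k), i ≠ r →
      ∃ u, T.1.Adj i u ∧ (pf T u).length + 1 = (pf T i).length := by
    intro T i hi
    rcases hw : pf T i with _ | @⟨_, u, _, h, q⟩
    · exact absurd rfl hi
    · have hp := hpf1 T i
      rw [hw] at hp
      have hq : q = pf T u := hpf2 T u q hp.of_cons
      exact ⟨u, h, by rw [SimpleGraph.Walk.length_cons, hq]⟩
  choose par hpadj hplen using hpar
  -- the encoding map
  set code : {p : SimpleGraph (Fin k) × (Fin k → V) //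
      p.1.IsTree ∧ p.2 r = v ∧ ∀ i j, p.1.Adj i j → G.Adj (p.2 i) (p.2 j)} →
      TK × ({i : Fin k // i ≠ r} → Fin d) := fun p =>
    (⟨p.1.1, p.2.1⟩, fun i =>
      J (p.1.2 (par ⟨p.1.1, p.2.1⟩ i.1 i.2))
        ⟨p.1.2 i.1, (p.2.2.2 _ _ (hpadj ⟨p.1.1, p.2.1⟩ i.1 i.2)).symm⟩) with hcode
  have hcodeinj : Function.Injective code := by
    rintro ⟨⟨T, f⟩, hT, hf, hhom⟩ ⟨⟨T', f'⟩, hT', hf', hhom'⟩ hcc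
    have h1 : T = T' := congrArg Subtype.val (congrArg Prod.fst hcc)
    subst h1
    have h2 := congrArg Prod.snd hcc
    simp only [hcode] at h2
    -- prove f = f'
    have key : ∀ (n : ℕ) (i : Fin k), (pf ⟨T, hT⟩ i).length = n → f i = f' i := by
      intro n
      induction n using Nat.strong_induction_on with
      | _ n IH =>
        intro i hlen
        rcases eq_or_ne i r with rfl | hir
        · exact hf.trans hf'.symm
        · have hu := IH ((pf ⟨T, hT⟩ (par ⟨T, hT⟩ i hir)).length) (by
            have := hplen ⟨T, hT⟩ i hir; omega) (par ⟨T, hT⟩ i hir) rfl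
          have hci := congrFun h2 ⟨i, hir⟩
          have hcast := hJcast (f' (par ⟨T, hT⟩ i hir)) (f (par ⟨T, hT⟩ i hir)) hu.symm (f' i)
            ((hhom' _ _ (hpadj ⟨T, hT⟩ i hir)).symm)
            (by rw [hu]; exact (hhom' _ _ (hpadj ⟨T, hT⟩ i hir)).symm)
          have := (J (f (par ⟨T, hT⟩ i hir))).injective (hci.trans hcast)
          exact congrArg Subtype.val this
    have : f = f' := funext fun i => key _ i rfl
    subst this
    rfl
  calc Nat.card _ ≤ Nat.card (TK × ({i : Fin k // i ≠ r} → Fin d)) :=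
        Nat.card_le_card_of_injective code hcodeinj
    _ = Nat.card TK * d ^ (k - 1) := by
        rw [Nat.card_prod, Nat.card_eq_fintype_card (α := ({i : Fin k // i ≠ r} → Fin d)),
          Fintype.card_fun]
        congr 2
        · simp
        · rw [Fintype.card_subtype_compl, Fintype.card_subtype_eq, Fintype.card_fin]

end Embed

lemma iso_isTree {A B : Type*} {X : SimpleGraph A} {Y : SimpleGraph B} (e : X ≃g Y)
    (h : Y.IsTree) : X.IsTree := by
  constructor
  · exact e.connected_iff.2 h.isConnected
  · intro u c hc
    exact h.IsAcyclic (c.map e.toHom) (hc.map e.injective)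

section Count

variable {V : Type*} [Fintype V] {G : SimpleGraph V} {d k : ℕ}

lemma label_count (hk : 0 < k) (v : V) :
    Nat.card {H : G.Subgraph // H.coe.IsTree ∧ H.verts.ncard = k ∧ v ∈ H.verts}
        * (k - 1).factorial
      ≤ Nat.card {p : SimpleGraph (Fin k) × (Fin k → V) //
          p.1.IsTree ∧ p.2 ⟨0, hk⟩ = v ∧ ∀ i j, p.1.Adj i j → G.Adj (p.2 i) (p.2 j)} := by
  classical
  set r : Fin k := ⟨0, hk⟩ with hr
  have hSubFin : Finite G.Subgraph := by
    apply Finite.of_injective (fun H : G.Subgraph => (H.verts, H.Adj))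
    rintro H H' hh
    rw [Prod.mk.injEq] at hh
    exact SimpleGraph.Subgraph.ext hh.1 hh.2
  set S := {H : G.Subgraph // H.coe.IsTree ∧ H.verts.ncard = k ∧ v ∈ H.verts} with hS
  have EE : ∀ Hs : S, ∃ e : Fin k ≃ ↥(Hs.1.verts), (e r : V) = v := by
    intro Hs
    have hfin : Hs.1.verts.Finite := Set.toFinite _
    have : Fintype ↥Hs.1.verts := hfin.fintype
    have hcard : Fintype.card ↥Hs.1.verts = k := by
      rw [← Nat.card_eq_fintype_card, Nat.card_coe_set_eq, Hs.2.2.1]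
    have e0 : ↥Hs.1.verts ≃ Fin k := Fintype.equivFinOfCardEq hcard
    refine ⟨(Equiv.swap r (e0 ⟨v, Hs.2.2.2⟩)).trans e0.symm, ?_⟩
    simp [Equiv.swap_apply_left]
  choose E hE using EE
  set gp : Equiv.Perm {i : Fin k // i ≠ r} → Equiv.Perm (Fin k) :=
    fun π => Equiv.Perm.ofSubtype π with hgp
  have hgpr : ∀ π, gp π r = r :=
    fun π => Equiv.Perm.ofSubtype_apply_of_not_mem π (by simp)
  have hgpmem : ∀ π (i : {i : Fin k // i ≠ r}), gp π i.1 = (π i).1 :=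
    fun π i => Equiv.Perm.ofSubtype_apply_of_mem π i.2
  set Φ : S × Equiv.Perm {i : Fin k // i ≠ r} →
      {p : SimpleGraph (Fin k) × (Fin k → V) //
        p.1.IsTree ∧ p.2 r = v ∧ ∀ i j, p.1.Adj i j → G.Adj (p.2 i) (p.2 j)} := fun q =>
    ⟨(SimpleGraph.comap (fun i => (E q.1 (gp q.2 i))) q.1.1.coe,
      fun i => ((E q.1 (gp q.2 i) : ↥(q.1.1.verts)) : V)), by
        refine ⟨?_, ?_, ?_⟩
        · exact iso_isTree ⟨(gp q.2).trans (E q.1), Iff.rfl⟩ q.1.2.1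
        · show ((E q.1 (gp q.2 r) : ↥(q.1.1.verts)) : V) = v
          rw [hgpr]; exact hE q.1
        · intro i j hadj
          exact q.1.1.adj_sub hadj⟩ with hΦ
  have hsurj : ∀ (Hs : S) (π : Equiv.Perm {i : Fin k // i ≠ r}),
      Set.range (fun i => ((E Hs (gp π i) : ↥(Hs.1.verts)) : V)) = Hs.1.verts := by
    intro Hs π
    have h1 : Set.range (fun i => ((E Hs (gp π i) : ↥(Hs.1.verts)) : V))
        = Subtype.val '' Set.range (fun i => E Hs (gp π i)) := Set.range_comp _ _
    have h2 : Set.range (fun i => E Hs (gp π i)) = Set.univ :=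
      Set.range_eq_univ.2 ((E Hs).surjective.comp (gp π).surjective)
    rw [h1, h2, Set.image_univ, Subtype.range_coe]
  have hΦinj : Function.Injective Φ := by
    rintro ⟨Hs, π⟩ ⟨Hs', π'⟩ hq
    simp only [hΦ, Subtype.mk.injEq, Prod.mk.injEq] at hq
    obtain ⟨hT, hl⟩ := hq
    have hverts : Hs.1.verts = Hs'.1.verts := by
      rw [← hsurj Hs π, ← hsurj Hs' π', hl]
    have hAdjdir : ∀ (A B : S) (ρ ρ' : Equiv.Perm {i : Fin k // i ≠ r}),
        (SimpleGraph.comap (fun i => (E A (gp ρ i))) A.1.coe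
          = SimpleGraph.comap (fun i => (E B (gp ρ' i))) B.1.coe) →
        ((fun i => ((E A (gp ρ i) : ↥(A.1.verts)) : V))
          = fun i => ((E B (gp ρ' i) : ↥(B.1.verts)) : V)) →
        ∀ a b, A.1.Adj a b → B.1.Adj a b := by
      intro A B ρ ρ' hT hl a b hab
      have ha : a ∈ A.1.verts := A.1.edge_vert hab
      have hb : b ∈ A.1.verts := A.1.edge_vert hab.symm
      set i := (gp ρ).symm ((E A).symm ⟨a, ha⟩) with hi
      set j := (gp ρ).symm ((E A).symm ⟨b, hb⟩) with hj
      have hia : ((E A (gp ρ i) : ↥(A.1.verts)) : V) = a := by simp [hi]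
      have hjb : ((E A (gp ρ j) : ↥(A.1.verts)) : V) = b := by simp [hj]
      have hTadj : (SimpleGraph.comap (fun i => (E A (gp ρ i))) A.1.coe).Adj i j := by
        show A.1.coe.Adj (E A (gp ρ i)) (E A (gp ρ j))
        rw [SimpleGraph.Subgraph.coe_adj, hia, hjb]
        exact hab
      rw [hT] at hTadj
      have : B.1.Adj ((E B (gp ρ' i) : ↥(B.1.verts)) : V) ((E B (gp ρ' j) : ↥(B.1.verts)) : V) :=
        hTadj
      rwa [← congrFun hl i, ← congrFun hl j, hia, hjb] at this
    have hHs : Hs = Hs' := by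
      refine Subtype.ext (SimpleGraph.Subgraph.ext hverts ?_)
      funext a b
      exact propext ⟨hAdjdir Hs Hs' π π' hT hl a b, hAdjdir Hs' Hs π' π hT.symm hl.symm a b⟩
    subst hHs
    have hgeq : ∀ i : Fin k, gp π i = gp π' i := by
      intro i
      have h1 := congrFun hl i
      exact (E Hs).injective (Subtype.ext h1)
    have hππ : π = π' := by
      apply Equiv.ext
      intro i
      apply Subtype.ext
      rw [← hgpmem π i, ← hgpmem π' i]
      exact hgeq i.1
    rw [hππ]
  calc Nat.card S * (k - 1).factorial
      = Nat.card (S × Equiv.Perm {i : Fin k // i ≠ r}) := by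
        rw [Nat.card_prod]
        congr 1
        rw [Nat.card_eq_fintype_card, Fintype.card_perm, Fintype.card_subtype_compl,
          Fintype.card_subtype_eq, Fintype.card_fin]
    _ ≤ _ := Nat.card_le_card_of_injective Φ hΦinj

end Count


end Aux

/-- In a graph of maximum degree at most `d`, the number of subtrees on exactly `k`
vertices containing a fixed vertex `v` is at most `k^(k-2) · d^(k-1) / (k-1)!`. -/
theorem tree_count_le_cayley {V : Type*} [Fintype V] (G : SimpleGraph V) (d k : ℕ)
    (hk : 0 < k) (hdeg : ∀ w : V, (G.neighborSet w).ncard ≤ d) (v : V) :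
    (({H : G.Subgraph | H.coe.IsTree ∧ H.verts.ncard = k ∧ v ∈ H.verts}).ncard : ℝ) ≤
      (k : ℝ) ^ (k - 2) * (d : ℝ) ^ (k - 1) / (Nat.factorial (k - 1)) := by
  classical
  have hfin : Finite G.Subgraph := by
    apply Finite.of_injective (fun H : G.Subgraph => (H.verts, H.Adj))
    rintro H H' hh
    rw [Prod.mk.injEq] at hh
    exact SimpleGraph.Subgraph.ext hh.1 hh.2
  have h0 : ({H : G.Subgraph | H.coe.IsTree ∧ H.verts.ncard = k ∧ v ∈ H.verts}).ncard
      = Nat.card {H : G.Subgraph // H.coe.IsTree ∧ H.verts.ncard = k ∧ v ∈ H.verts} := by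
    rw [← Nat.card_coe_set_eq]
    rfl
  have hchain : ({H : G.Subgraph | H.coe.IsTree ∧ H.verts.ncard = k ∧ v ∈ H.verts}).ncard
      * (k - 1).factorial ≤ k ^ (k - 2) * d ^ (k - 1) := by
    calc ({H : G.Subgraph | H.coe.IsTree ∧ H.verts.ncard = k ∧ v ∈ H.verts}).ncard
        * (k - 1).factorial
        = Nat.card {H : G.Subgraph // H.coe.IsTree ∧ H.verts.ncard = k ∧ v ∈ H.verts}
          * (k - 1).factorial := by rw [h0]
      _ ≤ Nat.card {p : SimpleGraph (Fin k) × (Fin k → V) //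
            p.1.IsTree ∧ p.2 ⟨0, hk⟩ = v ∧ ∀ i j, p.1.Adj i j → G.Adj (p.2 i) (p.2 j)} :=
          label_count hk v
      _ ≤ Nat.card {T : SimpleGraph (Fin k) // T.IsTree} * d ^ (k - 1) :=
          embed_count hk hdeg v
      _ ≤ k ^ (k - 2) * d ^ (k - 1) :=
          Nat.mul_le_mul_right _ (card_trees_le k hk)
  rw [le_div_iff₀ (by positivity : (0 : ℝ) < (Nat.factorial (k - 1) : ℝ))]
  calc (({H : G.Subgraph | H.coe.IsTree ∧ H.verts.ncard = k ∧ v ∈ H.verts}).ncard : ℝ)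
      * (Nat.factorial (k - 1) : ℝ)
      = ((({H : G.Subgraph | H.coe.IsTree ∧ H.verts.ncard = k ∧ v ∈ H.verts}).ncard
        * (k - 1).factorial : ℕ) : ℝ) := by push_cast; ring
    _ ≤ ((k ^ (k - 2) * d ^ (k - 1) : ℕ) : ℝ) := by exact_mod_cast hchain
    _ = (k : ℝ) ^ (k - 2) * (d : ℝ) ^ (k - 1) := by push_cast; ring
end
end

section
/- For every nonempty set S of vertices of the d-dimensional hypercube Q^d, the number of edges of Q^d with exactly one endpoint in S is at least |S| · (d − 2·log₂|S|), where the right-hand side is interpreted as a real number. -/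
open MeasureTheory

noncomputable section

/-- The `d`-dimensional hypercube graph on `{0,1}^d`: vertices are adjacent iff they
differ in exactly one coordinate. -/
def cube (d : ℕ) : SimpleGraph (Fin d → Bool) where
  Adj x y := hammingDist x y = 1
  symm := ⟨fun x y h => by simpa [hammingDist_comm] using h⟩
  loopless := ⟨fun x h => by simp [hammingDist_self] at h⟩

section Helpers

open Finset

variable {d : ℕ}

/-- number of neighbors of `x` inside `B` -/
def nbrCount (x : Fin d → Bool) (B : Finset (Fin d → Bool)) : ℕ :=
  #(B.filter fun y => hammingDist x y = 1)

def pc (A B : Finset (Fin d → Bool)) : ℕ := ∑ x ∈ A, nbrCount x B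

lemma nbr_univ (x : Fin d → Bool) : nbrCount x Finset.univ = d := by
  have himg : (Finset.univ.filter fun y => hammingDist x y = 1)
      = Finset.univ.image (fun i : Fin d => Function.update x i (!(x i))) := by
    ext y
    simp only [mem_filter, mem_univ, true_and, mem_image]
    constructor
    · intro hy
      obtain ⟨i, hi⟩ := Finset.card_eq_one.mp hy
      refine ⟨i, ?_⟩
      funext j
      by_cases hj : j = i
      · subst hj
        have : j ∈ ({j} : Finset (Fin d)) := mem_singleton_self j
        rw [← hi] at this
        simp only [mem_filter, mem_univ, true_and] at this
        simp [Function.update_self]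
        cases hx : x j <;> cases hyy : y j <;> simp_all
      · have : j ∉ ({i} : Finset (Fin d)) := by simp [hj]
        rw [← hi] at this
        simp only [mem_filter, mem_univ, true_and, not_not] at this
        simp [Function.update_of_ne hj, this]
    · rintro ⟨i, rfl⟩
      have : (Finset.univ.filter fun j => x j ≠ Function.update x i (!(x i)) j) = {i} := by
        ext j
        by_cases hj : j = i
        · subst hj; simp [Function.update_self]
        · simp [Function.update_of_ne hj, hj]
      simp only [hammingDist, this, card_singleton]
  have hinj : Function.Injective (fun i : Fin d => Function.update x i (!(x i))) := by
    intro i j h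
    by_contra hij
    have h2 : Function.update x i (!(x i)) i = Function.update x j (!(x j)) i := congrFun h i
    rw [Function.update_self, Function.update_of_ne (fun hh : i = j => hij hh)] at h2
    simp at h2
  rw [nbrCount, himg, Finset.card_image_of_injective _ hinj, card_univ, Fintype.card_fin]

def half (b : Bool) (A : Finset (Fin (d+1) → Bool)) : Finset (Fin d → Bool) :=
  Finset.univ.filter fun x => Fin.cons b x ∈ A

lemma hd_cons (a b : Bool) (x y : Fin d → Bool) :
    hammingDist (Fin.cons a x : Fin (d+1) → Bool) (Fin.cons b y) =
      (if a = b then 0 else 1) + hammingDist x y := by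
  simp only [hammingDist, card_filter, Fin.sum_univ_succ, Fin.cons_zero, Fin.cons_succ]
  by_cases h : a = b <;> simp [h]

lemma half_union (b : Bool) (A : Finset (Fin (d+1) → Bool)) :
    A = ((half b A).image (Fin.cons b)) ∪ ((half (!b) A).image (Fin.cons (!b))) := by
  ext z
  simp only [mem_union, mem_image, half, mem_filter, mem_univ, true_and]
  constructor
  · intro hz
    have hz0 : z 0 = b ∨ z 0 = !b := by cases b <;> cases h : z 0 <;> simp
    rcases hz0 with h0 | h0
    · exact Or.inl ⟨Fin.tail z, by rw [← h0, Fin.cons_self_tail]; exact ⟨hz, rfl⟩⟩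
    · exact Or.inr ⟨Fin.tail z, by rw [← h0, Fin.cons_self_tail]; exact ⟨hz, rfl⟩⟩
  · rintro (⟨x, hx, rfl⟩ | ⟨x, hx, rfl⟩) <;> exact hx

lemma half_disjoint (b : Bool) (A : Finset (Fin (d+1) → Bool)) :
    Disjoint ((half b A).image (fun x => (Fin.cons b x : Fin (d+1) → Bool)))
      ((half (!b) A).image (fun x => (Fin.cons (!b) x : Fin (d+1) → Bool))) := by
  rw [Finset.disjoint_left]
  rintro z hz hz'
  simp only [mem_image] at hz hz'
  obtain ⟨x, -, rfl⟩ := hz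
  obtain ⟨y, -, hy⟩ := hz'
  have := congrFun hy 0
  simp [Fin.cons_zero] at this

lemma card_halves (A : Finset (Fin (d+1) → Bool)) :
    A.card = (half false A).card + (half true A).card := by
  conv_lhs => rw [half_union false A]
  rw [Finset.card_union_of_disjoint (half_disjoint false A),
    Finset.card_image_of_injective _ (Fin.cons_right_injective _),
    Finset.card_image_of_injective _ (Fin.cons_right_injective _)]
  rfl

lemma nbr_cons (b : Bool) (x : Fin d → Bool) (A : Finset (Fin (d+1) → Bool)) :
    nbrCount (Fin.cons b x) A = nbrCount x (half b A) + (if x ∈ half (!b) A then 1 else 0) := by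
  conv_lhs => rw [nbrCount, half_union b A]
  rw [filter_union, card_union_of_disjoint
    ((half_disjoint b A).mono (filter_subset _ _) (filter_subset _ _))]
  congr 1
  · rw [filter_image, Finset.card_image_of_injective _ (Fin.cons_right_injective _)]
    congr 1
    apply filter_congr
    intro y _
    rw [hd_cons]
    simp
  · rw [filter_image, Finset.card_image_of_injective _ (Fin.cons_right_injective _)]
    have : ((half (!b) A).filter fun y => hammingDist (Fin.cons b x : Fin (d+1) → Bool) (Fin.cons (!b) y) = 1)
        = (half (!b) A).filter fun y => y = x := by
      apply filter_congr
      intro y _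
      rw [hd_cons]
      have hb : ¬ (b = !b) := by cases b <;> simp
      simp [hb, hammingDist_eq_zero, eq_comm]
    rw [this, Finset.filter_eq']
    split <;> simp

lemma sum_halves (A : Finset (Fin (d+1) → Bool)) (f : (Fin (d+1) → Bool) → ℕ) :
    ∑ z ∈ A, f z
      = ∑ x ∈ half false A, f (Fin.cons false x) + ∑ x ∈ half true A, f (Fin.cons true x) := by
  conv_lhs => rw [half_union false A]
  rw [Finset.sum_union (half_disjoint false A),
    Finset.sum_image (fun x _ y _ h => Fin.cons_right_injective _ h),
    Finset.sum_image (fun x _ y _ h => Fin.cons_right_injective _ h)]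
  rfl

lemma pc_split (A : Finset (Fin (d+1) → Bool)) :
    pc A A = pc (half false A) (half false A) + pc (half true A) (half true A)
      + ((half false A) ∩ (half true A)).card + ((half true A) ∩ (half false A)).card := by
  rw [pc, sum_halves A (fun z => nbrCount z A)]
  have e0 : ∑ x ∈ half false A, nbrCount (Fin.cons false x) A
      = pc (half false A) (half false A) + ((half false A) ∩ (half true A)).card := by
    rw [pc]
    simp_rw [nbr_cons false]
    rw [Finset.sum_add_distrib]
    congr 1
    rw [Finset.sum_ite_mem]
    simp
  have e1 : ∑ x ∈ half true A, nbrCount (Fin.cons true x) A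
      = pc (half true A) (half true A) + ((half true A) ∩ (half false A)).card := by
    rw [pc]
    simp_rw [nbr_cons true]
    rw [Finset.sum_add_distrib]
    congr 1
    rw [Finset.sum_ite_mem]
    simp
  rw [e0, e1]
  ring

lemma key (a b : ℕ) (hab : a ≤ b) :
    (a : ℝ) * Real.logb 2 a + (b : ℝ) * Real.logb 2 b + (a : ℝ)
      ≤ ((a : ℝ) + b) * Real.logb 2 ((a : ℝ) + b) := by
  rcases Nat.eq_zero_or_pos a with rfl | ha
  · simp
  have hb : 0 < b := lt_of_lt_of_le ha hab
  have ha' : (0:ℝ) < a := by exact_mod_cast ha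
  have hb' : (0:ℝ) < b := by exact_mod_cast hb
  have hab' : (a:ℝ) ≤ b := by exact_mod_cast hab
  have l1 : Real.logb 2 a + 1 ≤ Real.logb 2 ((a:ℝ) + b) := by
    have h2a : Real.logb 2 (2 * a) = 1 + Real.logb 2 a := by
      rw [Real.logb_mul two_ne_zero (ne_of_gt ha'), Real.logb_self_eq_one one_lt_two]
    have := Real.logb_le_logb_of_le (b := 2) one_lt_two (by linarith : (0:ℝ) < 2 * a)
      (by linarith : (2:ℝ) * a ≤ (a:ℝ) + b)
    linarith
  have l2 : Real.logb 2 b ≤ Real.logb 2 ((a:ℝ) + b) :=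
    Real.logb_le_logb_of_le one_lt_two hb' (by linarith)
  nlinarith [mul_le_mul_of_nonneg_left l1 (le_of_lt ha'),
    mul_le_mul_of_nonneg_left l2 (le_of_lt hb')]

lemma pc_le : ∀ (d : ℕ) (A : Finset (Fin d → Bool)),
    (pc A A : ℝ) ≤ 2 * A.card * Real.logb 2 A.card := by
  intro d
  induction d with
  | zero =>
    intro A
    have hz : pc A A = 0 := by
      rw [pc]
      apply Finset.sum_eq_zero
      intro x _
      rw [nbrCount]
      have : (A.filter fun y => hammingDist x y = 1) = ∅ := by
        apply Finset.filter_false_of_mem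
        intro y _
        have : x = y := Subsingleton.elim x y
        simp [this]
      simp [this]
    rw [hz]
    rcases Nat.eq_zero_or_pos A.card with h | h
    · simp [h]
    · have hlog : (0:ℝ) ≤ Real.logb 2 A.card := Real.logb_nonneg one_lt_two (by exact_mod_cast h)
      have h2 : (0:ℝ) ≤ 2 * (A.card:ℝ) := by positivity
      exact_mod_cast mul_nonneg h2 hlog
  | succ d ih =>
    intro A
    set A0 := half false A with hA0
    set A1 := half true A with hA1
    have hc := card_halves A
    have hsplit := pc_split A
    have h0 := ih A0
    have h1 := ih A1
    have hi1 : (A0 ∩ A1).card ≤ min A0.card A1.card :=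
      le_min (Finset.card_le_card Finset.inter_subset_left)
        (Finset.card_le_card Finset.inter_subset_right)
    have hi2 : (A1 ∩ A0).card ≤ min A0.card A1.card :=
      le_min (Finset.card_le_card Finset.inter_subset_right)
        (Finset.card_le_card Finset.inter_subset_left)
    have hkey : (A0.card : ℝ) * Real.logb 2 A0.card + (A1.card : ℝ) * Real.logb 2 A1.card
        + (min A0.card A1.card : ℝ)
        ≤ ((A0.card : ℝ) + A1.card) * Real.logb 2 ((A0.card : ℝ) + A1.card) := by
      rcases le_total A0.card A1.card with h | h
      · have := key A0.card A1.card h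
        rw [min_eq_left (by exact_mod_cast h : (A0.card:ℝ) ≤ (A1.card:ℝ))]
        exact this
      · have h' := key A1.card A0.card h
        rw [min_eq_right (by exact_mod_cast h : (A1.card:ℝ) ≤ (A0.card:ℝ))]
        have e : ((A1.card:ℝ) + A0.card) = ((A0.card:ℝ) + A1.card) := by ring
        rw [e] at h'
        linarith [h']
    have hcR : (A.card : ℝ) = (A0.card : ℝ) + A1.card := by exact_mod_cast hc
    have hpcR : (pc A A : ℝ) = (pc A0 A0 : ℝ) + (pc A1 A1 : ℝ)
        + ((A0 ∩ A1).card : ℝ) + ((A1 ∩ A0).card : ℝ) := by exact_mod_cast hsplit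
    have hm1 : ((A0 ∩ A1).card : ℝ) ≤ (min A0.card A1.card : ℝ) := by exact_mod_cast hi1
    have hm2 : ((A1 ∩ A0).card : ℝ) ≤ (min A0.card A1.card : ℝ) := by exact_mod_cast hi2
    rw [hpcR, hcR]
    linarith

lemma pc_compl (F : Finset (Fin d → Bool)) : pc F F + pc F Fᶜ = F.card * d := by
  rw [pc, pc, ← Finset.sum_add_distrib]
  have : ∀ x ∈ F, nbrCount x F + nbrCount x Fᶜ = d := by
    intro x _
    have : nbrCount x F + nbrCount x Fᶜ = nbrCount x Finset.univ := by
      rw [nbrCount, nbrCount, nbrCount, ← Finset.card_union_of_disjoint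
        (Finset.disjoint_filter_filter (disjoint_compl_right)), ← Finset.filter_union,
        Finset.union_compl]
    rw [this, nbr_univ]
  rw [Finset.sum_congr rfl this, Finset.sum_const, smul_eq_mul]

lemma card_prod_filter (A B : Finset (Fin d → Bool)) :
    ((A ×ˢ B).filter fun p => hammingDist p.1 p.2 = 1).card = pc A B := by
  rw [pc, Finset.card_eq_sum_card_fiberwise
    (f := Prod.fst) (t := A)
    (fun p hp => (Finset.mem_product.mp (Finset.mem_filter.mp hp).1).1)]
  apply Finset.sum_congr rfl
  intro x hx
  rw [nbrCount]
  apply Finset.card_bij (fun p _ => p.2)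
  · intro p hp
    simp only [Finset.mem_filter, Finset.mem_product] at hp ⊢
    obtain ⟨⟨⟨-, hB⟩, hd1⟩, hfst⟩ := hp
    exact ⟨hB, by rw [← hfst]; exact hd1⟩
  · intro p hp q hq h
    simp only [Finset.mem_filter] at hp hq
    exact Prod.ext (hp.2.trans hq.2.symm) h
  · intro y hy
    simp only [Finset.mem_filter, Finset.mem_product] at hy ⊢
    exact ⟨(x, y), ⟨⟨⟨hx, hy.1⟩, hy.2⟩, rfl⟩, rfl⟩

end Helpers

/-- Lemma 2 (approximate Harper inequality for small sets): for every nonempty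
`S ⊆ V(Q^d)`, the edge boundary of `S` has size at least `|S|·(d - 2·log₂|S|)`. -/
theorem edge_boundary_ge (d : ℕ) (S : Set (Fin d → Bool)) (hS : S.Nonempty) :
    (S.ncard : ℝ) * ((d : ℝ) - 2 * Real.logb 2 (S.ncard : ℝ)) ≤
      (({e ∈ (cube d).edgeSet | ∃ x y, e = s(x, y) ∧ x ∈ S ∧ y ∉ S}).ncard : ℝ) := by
  classical
  set F : Finset (Fin d → Bool) := (Set.toFinite S).toFinset with hFdef
  have hF : ∀ x, x ∈ F ↔ x ∈ S := fun x => Set.Finite.mem_toFinset _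
  have hnc : S.ncard = F.card := Set.ncard_eq_toFinset_card S (Set.toFinite S)
  set P : Finset ((Fin d → Bool) × (Fin d → Bool)) :=
    (F ×ˢ Fᶜ).filter fun p => hammingDist p.1 p.2 = 1 with hPdef
  have hmemP : ∀ p : (Fin d → Bool) × (Fin d → Bool),
      p ∈ P ↔ (p.1 ∈ S ∧ p.2 ∉ S ∧ hammingDist p.1 p.2 = 1) := by
    intro p
    simp only [hPdef, Finset.mem_filter, Finset.mem_product, Finset.mem_compl, hF]
    tauto
  have hBeq : {e ∈ (cube d).edgeSet | ∃ x y, e = s(x, y) ∧ x ∈ S ∧ y ∉ S}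
      = (fun p : (Fin d → Bool) × (Fin d → Bool) => s(p.1, p.2)) '' ↑P := by
    ext e
    simp only [Set.mem_setOf_eq, Set.mem_image, Finset.mem_coe]
    constructor
    · rintro ⟨he, x, y, rfl, hx, hy⟩
      have hadj : (cube d).Adj x y := (cube d).mem_edgeSet.mp he
      exact ⟨(x, y), (hmemP (x, y)).mpr ⟨hx, hy, hadj⟩, rfl⟩
    · rintro ⟨⟨x, y⟩, hp, rfl⟩
      obtain ⟨hx, hy, hd1⟩ := (hmemP (x, y)).mp hp
      exact ⟨(cube d).mem_edgeSet.mpr hd1, x, y, rfl, hx, hy⟩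
  have hinj : Set.InjOn (fun p : (Fin d → Bool) × (Fin d → Bool) => s(p.1, p.2)) ↑P := by
    rintro ⟨x, y⟩ hp ⟨x', y'⟩ hq h
    obtain ⟨hx, hy, -⟩ := (hmemP (x, y)).mp hp
    obtain ⟨hx', hy', -⟩ := (hmemP (x', y')).mp hq
    simp only [Sym2.eq_iff] at h
    rcases h with ⟨rfl, rfl⟩ | ⟨rfl, rfl⟩
    · rfl
    · exact absurd hx' hy
  have hcount : ({e ∈ (cube d).edgeSet | ∃ x y, e = s(x, y) ∧ x ∈ S ∧ y ∉ S}).ncard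
      = pc F Fᶜ := by
    rw [hBeq, Set.ncard_image_of_injOn hinj, Set.ncard_coe_finset, hPdef, card_prod_filter]
  have hid : F.card * d = pc F F + pc F Fᶜ := (pc_compl F).symm
  have hle := pc_le d F
  have hidR : (F.card : ℝ) * d = (pc F F : ℝ) + (pc F Fᶜ : ℝ) := by exact_mod_cast hid
  rw [hcount, hnc]
  nlinarith [hle, hidR]
end
end

section
/- For every nonempty set S of vertices of the d-dimensional hypercube Q^d, the number of edges of Q^d with both endpoints in S is at most |S| · log₂|S| (as real numbers). -/
open MeasureTheory

noncomputable section

namespace CubeAux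

open Real Set

def cns {d : ℕ} (b : Bool) (y : Fin d → Bool) : Fin (d+1) → Bool := Fin.cons b y

@[simp] lemma cns_zero {d : ℕ} (b : Bool) (y : Fin d → Bool) : cns b y 0 = b := rfl

lemma cns_self_tail {d : ℕ} (u : Fin (d+1) → Bool) : cns (u 0) (Fin.tail u) = u :=
  Fin.cons_self_tail u

def E (d : ℕ) (S : Set (Fin d → Bool)) : Set (Sym2 (Fin d → Bool)) :=
  {e ∈ (cube d).edgeSet | ∀ x ∈ e, x ∈ S}

lemma hd_cons {d : ℕ} (a b : Bool) (x y : Fin d → Bool) :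
    hammingDist (cns a x) (cns b y) =
      (if a = b then 0 else 1) + hammingDist x y := by
  unfold hammingDist cns
  rw [Finset.card_filter, Finset.card_filter, Fin.sum_univ_succ]
  simp [Fin.cons_zero, Fin.cons_succ]

lemma decomp_subset (d : ℕ) (S : Set (Fin (d+1) → Bool)) :
    E (d+1) S ⊆
      (Sym2.map (cns false) '' E d (cns false ⁻¹' S) ∪
       Sym2.map (cns true) '' E d (cns true ⁻¹' S)) ∪
      (fun y => s(cns false y, cns true y)) ''
        ((cns false ⁻¹' S) ∩ (cns true ⁻¹' S)) := by
  intro e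
  induction e using Sym2.ind with
  | _ u v =>
    rintro ⟨hadj, hmem⟩
    have hA : hammingDist u v = 1 := (SimpleGraph.mem_edgeSet _).mp hadj
    have hu : u ∈ S := hmem u (Sym2.mem_mk_left u v)
    have hv : v ∈ S := hmem v (Sym2.mem_mk_right u v)
    have hu' : u = cns (u 0) (Fin.tail u) := (cns_self_tail u).symm
    have hv' : v = cns (v 0) (Fin.tail v) := (cns_self_tail v).symm
    rw [hu', hv', hd_cons] at hA
    by_cases h0 : u 0 = v 0
    · rw [if_pos h0] at hA
      have hA' : hammingDist (Fin.tail u) (Fin.tail v) = 1 := by omega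
      have hE : ∀ b : Bool, u 0 = b → s(Fin.tail u, Fin.tail v) ∈ E d (cns b ⁻¹' S) := by
        intro b hb
        refine ⟨(SimpleGraph.mem_edgeSet _).mpr hA', ?_⟩
        intro x hx
        rcases Sym2.mem_iff.mp hx with rfl | rfl
        · show cns b (Fin.tail u) ∈ S
          rwa [← hb, cns_self_tail]
        · show cns b (Fin.tail v) ∈ S
          rwa [← hb, h0, cns_self_tail]
      have himg : ∀ b : Bool, u 0 = b →
          s(u, v) = Sym2.map (cns b) s(Fin.tail u, Fin.tail v) := by
        intro b hb
        have e1 : cns b (Fin.tail u) = u := by rw [← hb]; exact cns_self_tail u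
        have e2 : cns b (Fin.tail v) = v := by rw [← hb, h0]; exact cns_self_tail v
        rw [Sym2.map_pair_eq, e1, e2]
      left
      cases hb : u 0
      · left; exact ⟨s(Fin.tail u, Fin.tail v), hE false hb, (himg false hb).symm⟩
      · right; exact ⟨s(Fin.tail u, Fin.tail v), hE true hb, (himg true hb).symm⟩
    · rw [if_neg h0] at hA
      have hA' : Fin.tail u = Fin.tail v := by
        have : hammingDist (Fin.tail u) (Fin.tail v) = 0 := by omega
        exact eq_of_hammingDist_eq_zero this
      right
      refine ⟨Fin.tail u, ⟨?_, ?_⟩, ?_⟩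
      · show cns false (Fin.tail u) ∈ S
        cases hb : u 0
        · rwa [← hb, cns_self_tail]
        · rw [hA']
          have hb' : v 0 = false := by
            cases hc : v 0
            · rfl
            · rw [hb, hc] at h0; exact absurd rfl h0
          rwa [← hb', cns_self_tail]
      · show cns true (Fin.tail u) ∈ S
        cases hb : u 0
        · rw [hA']
          have hb' : v 0 = true := by
            cases hc : v 0
            · rw [hb, hc] at h0; exact absurd rfl h0
            · rfl
          rwa [← hb', cns_self_tail]
        · rwa [← hb, cns_self_tail]
      · show s(cns false (Fin.tail u), cns true (Fin.tail u)) = s(u, v)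
        cases hb : u 0
        · have hb' : v 0 = true := by
            cases hc : v 0
            · rw [hb, hc] at h0; exact absurd rfl h0
            · rfl
          have e1 : cns false (Fin.tail u) = u := by rw [← hb]; exact cns_self_tail u
          have e2 : cns true (Fin.tail u) = v := by
            rw [hA', ← hb']; exact cns_self_tail v
          rw [e1, e2]
        · have hb' : v 0 = false := by
            cases hc : v 0
            · rfl
            · rw [hb, hc] at h0; exact absurd rfl h0
          have e1 : cns true (Fin.tail u) = u := by rw [← hb]; exact cns_self_tail u
          have e2 : cns false (Fin.tail u) = v := by
            rw [hA', ← hb']; exact cns_self_tail v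
          rw [e1, e2, Sym2.eq_swap]

lemma card_split (d : ℕ) (S : Set (Fin (d+1) → Bool)) :
    S.ncard = (cns false ⁻¹' S).ncard + (cns true ⁻¹' S).ncard := by
  have hinj : ∀ b : Bool, Function.Injective (cns b : (Fin d → Bool) → Fin (d+1) → Bool) := by
    intro b x y h
    funext i
    have := congrFun h i.succ
    simpa [cns] using this
  have hS : S = (cns false '' (cns false ⁻¹' S)) ∪
      (cns true '' (cns true ⁻¹' S)) := by
    ext u
    constructor
    · intro hu
      cases hb : u 0
      · left
        exact ⟨Fin.tail u, by rwa [mem_preimage, ← hb, cns_self_tail], by rw [← hb]; exact cns_self_tail u⟩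
      · right
        exact ⟨Fin.tail u, by rwa [mem_preimage, ← hb, cns_self_tail], by rw [← hb]; exact cns_self_tail u⟩
    · rintro (⟨y, hy, rfl⟩ | ⟨y, hy, rfl⟩) <;> exact hy
  have hdisj : Disjoint (cns false '' (cns false ⁻¹' S))
      (cns true '' (cns true ⁻¹' S)) := by
    rw [Set.disjoint_left]
    rintro a ⟨y, _, rfl⟩ ⟨z, _, hz⟩
    have := congrFun hz 0
    simp at this
  conv_lhs => rw [hS]
  rw [Set.ncard_union_eq hdisj, Set.ncard_image_of_injective _ (hinj false),
    Set.ncard_image_of_injective _ (hinj true)]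

lemma numeric (a b : ℝ) (ha : 0 ≤ a) (hab : a ≤ b) :
    a * logb 2 a + b * logb 2 b + a ≤ (a + b) * logb 2 (a + b) := by
  rcases eq_or_lt_of_le ha with h0 | h0
  · simp [← h0]
  · have hb : (0:ℝ) < b := lt_of_lt_of_le h0 hab
    have hab2 : (0:ℝ) < a + b := by linarith
    have h2a : a * logb 2 a + a = a * logb 2 (2 * a) := by
      rw [Real.logb_mul (by norm_num) (ne_of_gt h0), Real.logb_self_eq_one (by norm_num)]
      ring
    have h1 : a * logb 2 (2 * a) ≤ a * logb 2 (a + b) := by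
      apply mul_le_mul_of_nonneg_left _ ha
      exact (Real.logb_le_logb (by norm_num) (by linarith) hab2).mpr (by linarith)
    have h2 : b * logb 2 b ≤ b * logb 2 (a + b) := by
      apply mul_le_mul_of_nonneg_left _ hb.le
      exact (Real.logb_le_logb (by norm_num) hb hab2).mpr (by linarith)
    nlinarith [h2a, h1, h2]

lemma main : ∀ (d : ℕ) (S : Set (Fin d → Bool)),
    ((E d S).ncard : ℝ) ≤ (S.ncard : ℝ) * Real.logb 2 (S.ncard : ℝ) := by
  intro d
  induction d with
  | zero =>
    intro S
    have hE : E 0 S = ∅ := by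
      ext e
      induction e using Sym2.ind with
      | _ u v =>
        simp only [Set.mem_empty_iff_false, iff_false]
        rintro ⟨hadj, -⟩
        have h1 : hammingDist u v = 1 := (SimpleGraph.mem_edgeSet _).mp hadj
        have huv : u = v := Subsingleton.elim u v
        rw [huv, hammingDist_self] at h1
        exact absurd h1 (by norm_num)
    rw [hE]
    have h1 : S.ncard ≤ 1 := by
      have h := Set.ncard_le_ncard (Set.subset_univ S) (Set.toFinite _)
      rwa [Set.ncard_univ, Nat.card_eq_fintype_card, Fintype.card_fun,
        Fintype.card_fin, pow_zero] at h
    have h2 : S.ncard = 0 ∨ S.ncard = 1 := by omega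
    rcases h2 with h2 | h2 <;> rw [h2] <;> simp
  | succ d ih =>
    intro S
    set S0 := cns false ⁻¹' S with hS0
    set S1 := cns true ⁻¹' S with hS1
    have hcard : S.ncard = S0.ncard + S1.ncard := card_split d S
    have hle : (E (d+1) S).ncard ≤ (E d S0).ncard + (E d S1).ncard + (S0 ∩ S1).ncard := by
      calc (E (d+1) S).ncard
          ≤ ((Sym2.map (cns false) '' E d S0 ∪ Sym2.map (cns true) '' E d S1) ∪
              ((fun y => s(cns false y, cns true y)) '' (S0 ∩ S1))).ncard :=
            Set.ncard_le_ncard (decomp_subset d S) (Set.toFinite _)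
        _ ≤ (Sym2.map (cns false) '' E d S0 ∪ Sym2.map (cns true) '' E d S1).ncard +
              ((fun y => s(cns false y, cns true y)) '' (S0 ∩ S1)).ncard :=
            Set.ncard_union_le _ _
        _ ≤ ((Sym2.map (cns false) '' E d S0).ncard + (Sym2.map (cns true) '' E d S1).ncard) +
              ((fun y => s(cns false y, cns true y)) '' (S0 ∩ S1)).ncard := by
            gcongr
            exact Set.ncard_union_le _ _
        _ ≤ (E d S0).ncard + (E d S1).ncard + (S0 ∩ S1).ncard := by
            gcongr <;> exact Set.ncard_image_le (Set.toFinite _)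
    have hc0 : (S0 ∩ S1).ncard ≤ S0.ncard :=
      Set.ncard_le_ncard Set.inter_subset_left (Set.toFinite _)
    have hc1 : (S0 ∩ S1).ncard ≤ S1.ncard :=
      Set.ncard_le_ncard Set.inter_subset_right (Set.toFinite _)
    have ih0 := ih S0
    have ih1 := ih S1
    have hleR : ((E (d+1) S).ncard : ℝ) ≤
        ((E d S0).ncard : ℝ) + ((E d S1).ncard : ℝ) + ((S0 ∩ S1).ncard : ℝ) := by
      exact_mod_cast hle
    rw [hcard]
    push_cast
    rcases le_total S0.ncard S1.ncard with h01 | h01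
    · have hnum := numeric (S0.ncard : ℝ) (S1.ncard : ℝ) (Nat.cast_nonneg _)
        (by exact_mod_cast h01)
      have hcc : ((S0 ∩ S1).ncard : ℝ) ≤ (S0.ncard : ℝ) := by exact_mod_cast hc0
      linarith
    · have hnum := numeric (S1.ncard : ℝ) (S0.ncard : ℝ) (Nat.cast_nonneg _)
        (by exact_mod_cast h01)
      rw [add_comm ((S1.ncard : ℝ)) ((S0.ncard : ℝ))] at hnum
      have hcc : ((S0 ∩ S1).ncard : ℝ) ≤ (S1.ncard : ℝ) := by exact_mod_cast hc1
      linarith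

end CubeAux

/-- For every nonempty `S ⊆ V(Q^d)`, the number of edges of `Q^d` with both endpoints
in `S` is at most `|S|·log₂|S|`. -/
theorem edges_within_le (d : ℕ) (S : Set (Fin d → Bool)) (hS : S.Nonempty) :
    (({e ∈ (cube d).edgeSet | ∀ x ∈ e, x ∈ S}).ncard : ℝ) ≤
      (S.ncard : ℝ) * Real.logb 2 (S.ncard : ℝ) :=
  CubeAux.main d S
end
end

section
/- Let S be a set of vertices of the d-dimensional hypercube Q^d such that the subgraph of Q^d induced on S has minimum degree at least δ, and let v ∈ S. Then for every integer 0 ≤ i ≤ δ, the number of vertices u ∈ S whose graph distance from v in Q^d is exactly i is at least the binomial coefficient C(δ, i). -/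
open MeasureTheory

noncomputable section

namespace SphereAux

open Finset

variable {d : ℕ}

lemma hd_def (x y : Fin d → Bool) :
    hammingDist x y = #(Finset.univ.filter fun j => x j ≠ y j) := rfl

lemma exists_diff {x y : Fin d → Bool} (h : hammingDist x y = 1) :
    ∃ j, x j ≠ y j ∧ ∀ k, k ≠ j → x k = y k := by
  rw [hd_def, card_eq_one] at h
  obtain ⟨j, hj⟩ := h
  refine ⟨j, ?_, ?_⟩
  · have : j ∈ ({j} : Finset (Fin d)) := mem_singleton_self j
    rw [← hj, mem_filter] at this
    exact this.2
  · intro k hk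
    by_contra hne
    have : k ∈ ({j} : Finset (Fin d)) := by
      rw [← hj, mem_filter]; exact ⟨mem_univ _, hne⟩
    exact hk (mem_singleton.mp this)

lemma bool_eq {a b c : Bool} (h1 : a ≠ b) (h2 : c ≠ b) : a = c := by
  cases a <;> cases b <;> cases c <;> simp_all

/-- If `v` agrees with `x` at the flipped coordinate, the distance goes up by one. -/
lemma dist_up {v x y : Fin d → Bool} {j : Fin d} (hj : x j ≠ y j)
    (hk : ∀ k, k ≠ j → x k = y k) (hvx : v j = x j) :
    hammingDist v y = hammingDist v x + 1 := by
  have hvy : v j ≠ y j := hvx ▸ hj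
  have hset : (Finset.univ.filter fun k => v k ≠ y k) = insert j (Finset.univ.filter fun k => v k ≠ x k) := by
    ext k
    simp only [mem_filter, mem_univ, true_and, mem_insert]
    by_cases hkj : k = j
    · subst hkj; simp [hvy]
    · rw [hk k hkj]; simp [hkj]
  have hjn : j ∉ (Finset.univ.filter fun k => v k ≠ x k) := by
    simp [hvx]
  rw [hd_def, hd_def, hset, card_insert_of_notMem hjn]

lemma dist_step {v x y : Fin d → Bool} {j : Fin d} (hj : x j ≠ y j)
    (hk : ∀ k, k ≠ j → x k = y k) :
    hammingDist v y = hammingDist v x + 1 ∨ hammingDist v x = hammingDist v y + 1 := by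
  by_cases hvx : v j = x j
  · exact Or.inl (dist_up hj hk hvx)
  · refine Or.inr (dist_up (v := v) (Ne.symm hj) (fun k hk' => (hk k hk').symm) ?_)
    exact bool_eq (fun h => hvx h) (Ne.symm hj)

/-- Vertices adjacent to `x` that are closer to `v` number at most `hammingDist v x`. -/
lemma card_neighbors_lt_le (v x : Fin d → Bool) (B : Finset (Fin d → Bool))
    (hB : ∀ y ∈ B, hammingDist x y = 1 ∧ hammingDist v y < hammingDist v x) :
    #B ≤ hammingDist v x := by
  have hsub : B ⊆ ({j | v j ≠ x j} : Finset (Fin d)).image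
      (fun j => Function.update x j (!(x j))) := by
    intro y hy
    obtain ⟨h1, h2⟩ := hB y hy
    obtain ⟨j, hj, hkeq⟩ := exists_diff h1
    have hvj : v j ≠ x j := by
      intro hvx
      have := dist_up hj hkeq hvx
      omega
    refine mem_image.mpr ⟨j, by simp [hvj], ?_⟩
    funext k
    by_cases hkj : k = j
    · subst hkj
      simp only [Function.update_self]
      cases hx : x k <;> cases hy' : y k <;> simp_all
    · rw [Function.update_of_ne hkj, hkeq k hkj]
  calc #B ≤ _ := card_le_card hsub
    _ ≤ #(Finset.univ.filter fun j => v j ≠ x j) := card_image_le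
    _ = hammingDist v x := (hd_def v x).symm

lemma exists_walk (n : ℕ) : ∀ x y : Fin d → Bool, hammingDist x y = n →
    ∃ p : (cube d).Walk x y, p.length = n := by
  induction n with
  | zero =>
    intro x y h
    obtain rfl := eq_of_hammingDist_eq_zero h
    exact ⟨SimpleGraph.Walk.nil, rfl⟩
  | succ n ih =>
    intro x y h
    have hj : ∃ j, x j ≠ y j := by
      by_contra hc
      push_neg at hc
      have : x = y := funext hc
      subst this
      simp [hammingDist_self] at h
    obtain ⟨j, hj⟩ := hj
    set x' := Function.update x j (y j) with hx'
    have hx'j : x j ≠ x' j := by simp [hx', hj]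
    have hx'k : ∀ k, k ≠ j → x k = x' k := fun k hk => by
      simp [hx', Function.update_of_ne hk]
    have hadj : (cube d).Adj x x' := by
      show hammingDist x x' = 1
      rw [hd_def, card_eq_one]
      refine ⟨j, ?_⟩
      ext k
      simp only [mem_filter, mem_univ, true_and, mem_singleton]
      by_cases hkj : k = j
      · subst hkj; simp [hx'j]
      · simp [hkj, hx'k k hkj]
    have hdist : hammingDist x' y = n := by
      have hx'y : x' j = y j := by simp [hx']
      have hseteq : (Finset.univ.filter fun k => x' k ≠ y k) =
          (Finset.univ.filter fun k => x k ≠ y k).erase j := by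
        ext k
        simp only [mem_filter, mem_univ, true_and, mem_erase]
        by_cases hkj : k = j
        · subst hkj; simp [hx'y]
        · rw [← hx'k k hkj]; simp [hkj]
      have hjx : j ∈ (Finset.univ.filter fun k => x k ≠ y k) := by simp [hj]
      rw [hd_def, hseteq, card_erase_of_mem hjx, ← hd_def, h]; omega
    obtain ⟨p, hp⟩ := ih x' y hdist
    exact ⟨SimpleGraph.Walk.cons hadj p, by simp [hp]⟩

lemma walk_len {x y : Fin d → Bool} (p : (cube d).Walk x y) :
    hammingDist x y ≤ p.length := by
  induction p with
  | nil => simp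
  | @cons a b c h p ih =>
    have h1 : hammingDist a b = 1 := h
    calc hammingDist a c ≤ hammingDist a b + hammingDist b c := hammingDist_triangle _ _ _
      _ ≤ 1 + p.length := by omega
      _ = (SimpleGraph.Walk.cons h p).length := by simp [Nat.add_comm]

lemma cube_dist (x y : Fin d → Bool) : (cube d).dist x y = hammingDist x y := by
  obtain ⟨p, hp⟩ := exists_walk (hammingDist x y) x y rfl
  refine le_antisymm (hp ▸ SimpleGraph.dist_le p) ?_
  obtain ⟨q, hq⟩ := SimpleGraph.Reachable.exists_walk_length_eq_dist ⟨p⟩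
  rw [← hq]
  exact walk_len q

/-- The main counting lemma in `Finset` form. -/
lemma main (δ : ℕ) (T : Finset (Fin d → Bool)) (v : Fin d → Bool) (hv : v ∈ T)
    (hdeg : ∀ u ∈ T, δ ≤ #(T.filter fun w => hammingDist u w = 1)) :
    ∀ i, i ≤ δ → Nat.choose δ i ≤ #(T.filter fun u => hammingDist v u = i) := by
  intro i
  induction i with
  | zero =>
    intro _
    have : v ∈ T.filter fun u => hammingDist v u = 0 := by
      simp [mem_filter, hv, hammingDist_self]
    simpa using card_pos.mpr ⟨v, this⟩
  | succ i ih =>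
    intro hi
    have IH := ih (by omega)
    set A : ℕ → Finset (Fin d → Bool) := fun m => T.filter fun u => hammingDist v u = m
      with hA
    have key : #(A i) * (δ - i) ≤ #(A (i + 1)) * (i + 1) := by
      refine card_mul_le_card_mul (fun u w => hammingDist u w = 1) ?_ ?_
      · -- lower bound on neighbors one level up
        intro u hu
        have hui : hammingDist v u = i := (mem_filter.mp hu).2
        set N : Finset (Fin d → Bool) := T.filter fun w => hammingDist u w = 1 with hN
        have hNcard : δ ≤ #N := hdeg u (mem_filter.mp hu).1
        have hsplit := card_filter_add_card_filter_not
          (s := N) (p := fun w => hammingDist v w = i + 1)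
        have hlow : #(N.filter fun w => ¬ hammingDist v w = i + 1) ≤ i := by
          rw [← hui]
          refine card_neighbors_lt_le v u _ ?_
          intro w hw
          rw [mem_filter] at hw
          obtain ⟨hwN, hwne⟩ := hw
          rw [hN, mem_filter] at hwN
          refine ⟨hwN.2, ?_⟩
          obtain ⟨j, hj, hk⟩ := exists_diff hwN.2
          rcases dist_step (v := v) hj hk with h1 | h1 <;> omega
        have hup : δ - i ≤ #(N.filter fun w => hammingDist v w = i + 1) := by omega
        refine le_trans hup (card_le_card ?_)
        intro w hw
        rw [mem_filter] at hw
        rw [bipartiteAbove, mem_filter, hA, mem_filter]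
        rw [hN, mem_filter] at hw
        exact ⟨⟨hw.1.1, hw.2⟩, hw.1.2⟩
      · -- upper bound on neighbors one level down
        intro w hw
        have hwi : hammingDist v w = i + 1 := (mem_filter.mp hw).2
        rw [← hwi]
        refine card_neighbors_lt_le v w _ ?_
        intro u hu
        rw [bipartiteBelow, mem_filter] at hu
        obtain ⟨huA, hadj⟩ := hu
        rw [hA, mem_filter] at huA
        refine ⟨by rwa [hammingDist_comm], ?_⟩
        omega
    have hchoose : Nat.choose δ (i + 1) * (i + 1) = Nat.choose δ i * (δ - i) :=
      Nat.choose_succ_right_eq δ i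
    have : Nat.choose δ (i + 1) * (i + 1) ≤ #(A (i + 1)) * (i + 1) := by
      calc Nat.choose δ (i + 1) * (i + 1) = Nat.choose δ i * (δ - i) := hchoose
        _ ≤ #(A i) * (δ - i) := Nat.mul_le_mul_right _ IH
        _ ≤ #(A (i + 1)) * (i + 1) := key
    exact Nat.le_of_mul_le_mul_right this (Nat.succ_pos i)

end SphereAux

/-- If the subgraph of `Q^d` induced on `S` has minimum degree at least `δ` and `v ∈ S`,
then for every `0 ≤ i ≤ δ` the number of vertices of `S` at distance exactly `i` from `v`
is at least `C(δ, i)`. -/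
theorem sphere_count_ge (d δ : ℕ) (S : Set (Fin d → Bool))
    (hdeg : ∀ v ∈ S, δ ≤ (S ∩ (cube d).neighborSet v).ncard)
    (v : Fin d → Bool) (hv : v ∈ S) (i : ℕ) (hi : i ≤ δ) :
    Nat.choose δ i ≤ ({u ∈ S | (cube d).dist v u = i}).ncard := by
  classical
  set T : Finset (Fin d → Bool) := S.toFinset with hT
  have hmemT : ∀ u, u ∈ T ↔ u ∈ S := fun u => Set.mem_toFinset
  have hdeg' : ∀ u ∈ T, δ ≤ (T.filter fun w => hammingDist u w = 1).card := by
    intro u hu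
    have := hdeg u ((hmemT u).mp hu)
    have hset : S ∩ (cube d).neighborSet u =
        ↑(T.filter fun w => hammingDist u w = 1) := by
      ext w
      simp only [Set.mem_inter_iff, SimpleGraph.mem_neighborSet, Finset.coe_filter,
        Set.mem_setOf_eq, hmemT]
      exact and_congr_right fun _ => Iff.rfl
    rwa [hset, Set.ncard_coe_finset] at this
  have hvT : v ∈ T := (hmemT v).mpr hv
  have hsets : {u ∈ S | (cube d).dist v u = i} =
      ↑(T.filter fun u => hammingDist v u = i) := by
    ext u
    simp only [Set.mem_setOf_eq, Finset.coe_filter, hmemT, SphereAux.cube_dist]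
  rw [hsets, Set.ncard_coe_finset]
  exact SphereAux.main δ T v hvT hdeg' i hi

end
end

section
/- For every set S of vertices of the d-dimensional hypercube Q^d with |S| ≤ 2^{d−1}, the number of edges of Q^d with exactly one endpoint in S is at least |S|. -/
open MeasureTheory

noncomputable section

namespace CubeProof

open Finset

variable {d : ℕ}

/-- Canonical path point: first `k` coordinates from `y`, rest from `x`. -/
def zs (x y : Fin d → Bool) (k : ℕ) : Fin d → Bool := fun j => if (j : ℕ) < k then y j else x j

lemma zs_zero (x y : Fin d → Bool) : zs x y 0 = x := by
  funext j; simp [zs]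

lemma zs_top (x y : Fin d → Bool) : zs x y d = y := by
  funext j; simp [zs, j.isLt]

lemma zs_agree {x y : Fin d → Bool} {k : ℕ} {j : Fin d} (hj : (j : ℕ) ≠ k) :
    zs x y k j = zs x y (k + 1) j := by
  rcases lt_or_gt_of_ne hj with h | h
  · simp [zs, h, Nat.lt_succ_of_lt h]
  · have h1 : ¬ (j : ℕ) < k := by omega
    have h2 : ¬ (j : ℕ) < k + 1 := by omega
    simp [zs, h1, h2]

lemma zs_at_lo {x y : Fin d → Bool} {k : ℕ} (hk : k < d) :
    zs x y k ⟨k, hk⟩ = x ⟨k, hk⟩ := by simp [zs]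

lemma zs_at_hi {x y : Fin d → Bool} {k : ℕ} (hk : k < d) :
    zs x y (k + 1) ⟨k, hk⟩ = y ⟨k, hk⟩ := by simp [zs]

open scoped Classical in
/-- The crossing index of the canonical path from `x` to `y` w.r.t. `S`. -/
def cross (S : Set (Fin d → Bool)) (x y : Fin d → Bool) : ℕ :=
  if h : ∃ k, zs x y (k + 1) ∉ S then Nat.find h else 0

open scoped Classical in
lemma cross_spec {S : Set (Fin d → Bool)} {x y : Fin d → Bool} (hx : x ∈ S) (hy : y ∉ S) :
    cross S x y < d ∧ zs x y (cross S x y) ∈ S ∧ zs x y (cross S x y + 1) ∉ S := by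
  have hd : 0 < d := by
    by_contra hd
    have : x = y := by
      funext j; exact absurd j.isLt (by omega)
    exact hy (this ▸ hx)
  have h : ∃ k, zs x y (k + 1) ∉ S := ⟨d - 1, by rw [show d - 1 + 1 = d by omega, zs_top]; exact hy⟩
  have hc : cross S x y = Nat.find h := by simp [cross, h]
  rw [hc]
  refine ⟨?_, ?_, Nat.find_spec h⟩
  · have : Nat.find h ≤ d - 1 :=
      Nat.find_le (show zs x y (d - 1 + 1) ∉ S by
        rw [show d - 1 + 1 = d by omega, zs_top]; exact hy)
    omega
  · rcases hk : Nat.find h with _ | j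
    · rw [zs_zero]; exact hx
    · have := Nat.find_min h (m := j) (by omega)
      simpa using this

lemma cross_ne {S : Set (Fin d → Bool)} {x y : Fin d → Bool} (hx : x ∈ S) (hy : y ∉ S) :
    x ⟨cross S x y, (cross_spec hx hy).1⟩ ≠ y ⟨cross S x y, (cross_spec hx hy).1⟩ := by
  obtain ⟨hk, hin, hout⟩ := cross_spec hx hy
  intro hxy
  apply hout
  have : zs x y (cross S x y) = zs x y (cross S x y + 1) := by
    funext j
    by_cases hj : (j : ℕ) = cross S x y
    · have : j = ⟨cross S x y, hk⟩ := Fin.ext hj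
      rw [this, zs_at_lo, zs_at_hi, hxy]
    · exact zs_agree hj
  exact this ▸ hin

lemma adj_of_diff_single {u v : Fin d → Bool} {k : Fin d} (hne : u k ≠ v k)
    (hag : ∀ j, j ≠ k → u j = v j) : (cube d).Adj u v := by
  show hammingDist u v = 1
  have : ({i | u i ≠ v i} : Finset (Fin d)) = {k} := by
    ext j
    simp only [Finset.mem_filter, Finset.mem_univ, true_and, Finset.mem_singleton]
    constructor
    · intro hj
      by_contra hjk
      exact hj (hag j hjk)
    · rintro rfl; exact hne
  simp [hammingDist, this]

lemma diff_eq_of_adj {u v : Fin d → Bool} (h : (cube d).Adj u v) {k : Fin d} (hk : u k ≠ v k)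
    {j : Fin d} (hj : u j ≠ v j) : j = k := by
  have h1 : ({i | u i ≠ v i} : Finset (Fin d)).card = 1 := h
  obtain ⟨a, ha⟩ := Finset.card_eq_one.mp h1
  have hkm : k ∈ ({i | u i ≠ v i} : Finset (Fin d)) := by simpa using hk
  have hjm : j ∈ ({i | u i ≠ v i} : Finset (Fin d)) := by simpa using hj
  rw [ha] at hkm hjm
  simp only [Finset.mem_singleton] at hkm hjm
  rw [hjm, hkm]

/-- The encoding map for the double counting. -/
def enc (S : Set (Fin d → Bool)) (p : (Fin d → Bool) × (Fin d → Bool)) :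
    ((Fin d → Bool) × (Fin d → Bool)) × (Fin d → Bool) :=
  ((zs p.1 p.2 (cross S p.1 p.2), zs p.1 p.2 (cross S p.1 p.2 + 1)),
    fun j => if (j : ℕ) < cross S p.1 p.2 then p.1 j else p.2 j)

lemma card_fix (j : Fin d) (b : Bool) :
    ({w : Fin d → Bool | w j = b} : Finset (Fin d → Bool)).card = 2 ^ (d - 1) := by
  classical
  have e : {w : Fin d → Bool // w j = b} ≃ ({i : Fin d // i ≠ j} → Bool) :=
    { toFun := fun w i => w.1 i.1
      invFun := fun g => ⟨fun i => if h : i = j then b else g ⟨i, h⟩, by simp⟩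
      left_inv := fun w => by
        ext i
        by_cases h : i = j
        · subst h; simp [w.2]
        · simp [h]
      right_inv := fun g => by
        funext i
        simp [i.2] }
  have h1 : ({w : Fin d → Bool | w j = b} : Finset (Fin d → Bool)).card
      = Fintype.card {w : Fin d → Bool // w j = b} := (Fintype.card_subtype _).symm
  rw [h1, Fintype.card_congr e]
  simp [Fintype.card_fun]

lemma enc_mem {S : Set (Fin d → Bool)} {x y : Fin d → Bool} (hx : x ∈ S) (hy : y ∉ S) :
    (cube d).Adj (enc S (x, y)).1.1 (enc S (x, y)).1.2 ∧ (enc S (x, y)).1.1 ∈ S ∧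
      (enc S (x, y)).1.2 ∉ S ∧
      ∀ j, (enc S (x, y)).1.1 j ≠ (enc S (x, y)).1.2 j →
        (enc S (x, y)).2 j = (enc S (x, y)).1.2 j := by
  obtain ⟨hk, hin, hout⟩ := cross_spec hx hy
  have hne := cross_ne hx hy
  set k := cross S x y with hkdef
  have hadj : (cube d).Adj (zs x y k) (zs x y (k + 1)) := by
    apply adj_of_diff_single (k := ⟨k, hk⟩)
    · rw [zs_at_lo hk, zs_at_hi hk]; exact hne
    · intro j hj
      exact zs_agree (fun hc => hj (Fin.ext hc))
  refine ⟨hadj, hin, hout, ?_⟩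
  intro j hj
  have hjk : j = ⟨k, hk⟩ := by
    by_contra hc
    exact hj (zs_agree (fun h => hc (Fin.ext h)))
  subst hjk
  simp [enc, zs, ← hkdef]

lemma enc_inj {S : Set (Fin d → Bool)} {x y x' y' : Fin d → Bool}
    (hx : x ∈ S) (hy : y ∉ S) (hx' : x' ∈ S) (hy' : y' ∉ S)
    (h : enc S (x, y) = enc S (x', y')) : x = x' ∧ y = y' := by
  have h1 : zs x y (cross S x y) = zs x' y' (cross S x' y') := congrArg (·.1.1) h
  have h2 : zs x y (cross S x y + 1) = zs x' y' (cross S x' y' + 1) := congrArg (·.1.2) h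
  have h3 : (fun j : Fin d => if (j : ℕ) < cross S x y then x j else y j)
      = fun j : Fin d => if (j : ℕ) < cross S x' y' then x' j else y' j := congrArg (·.2) h
  obtain ⟨hk, _, _⟩ := cross_spec hx hy
  obtain ⟨hk', _, _⟩ := cross_spec hx' hy'
  have hne := cross_ne hx hy
  set k := cross S x y with hkdef
  set k' := cross S x' y' with hkdef'
  have hkk : k = k' := by
    by_contra hc
    apply hne
    have hag : zs x' y' k' ⟨k, hk⟩ = zs x' y' (k' + 1) ⟨k, hk⟩ := zs_agree (by simpa using hc)
    calc x ⟨k, hk⟩ = zs x y k ⟨k, hk⟩ := (zs_at_lo hk).symm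
      _ = zs x' y' k' ⟨k, hk⟩ := by rw [h1]
      _ = zs x' y' (k' + 1) ⟨k, hk⟩ := hag
      _ = zs x y (k + 1) ⟨k, hk⟩ := by rw [h2]
      _ = y ⟨k, hk⟩ := zs_at_hi hk
  rw [← hkk] at h1 h2 h3
  constructor
  · funext j
    by_cases hj : (j : ℕ) < k
    · have := congrFun h3 j
      simpa [hj] using this
    · have := congrFun h1 j
      simpa [zs, hj] using this
  · funext j
    by_cases hj : (j : ℕ) < k
    · have := congrFun h1 j
      simpa [zs, hj] using this
    · have := congrFun h3 j
      simpa [hj] using this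

end CubeProof

open CubeProof Finset in
open scoped Classical in
/-- Lemma 3 (folklore isoperimetric bound): for every `S ⊆ V(Q^d)` with `|S| ≤ 2^(d-1)`,
the edge boundary of `S` has size at least `|S|`. -/
theorem edge_boundary_ge_card (d : ℕ) (S : Set (Fin d → Bool))
    (hS : 2 * S.ncard ≤ 2 ^ d) :
    S.ncard ≤ ({e ∈ (cube d).edgeSet | ∃ x y, e = s(x, y) ∧ x ∈ S ∧ y ∉ S}).ncard := by
  classical
  by_cases hS0 : S = ∅
  · simp [hS0]
  have hfin : S.Finite := S.toFinite
  have hpos : 0 < S.ncard := (Set.ncard_pos hfin).mpr (Set.nonempty_iff_ne_empty.mpr hS0)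
  have hd : 0 < d := by
    by_contra hd
    have hd0 : d = 0 := by omega
    subst hd0
    simp only [pow_zero] at hS
    omega
  set Sf : Finset (Fin d → Bool) := hfin.toFinset with hSf
  have hScard : Sf.card = S.ncard := (Set.ncard_eq_toFinset_card S hfin).symm
  set D : Finset ((Fin d → Bool) × (Fin d → Bool)) :=
    Finset.univ.filter (fun p => (cube d).Adj p.1 p.2 ∧ p.1 ∈ S ∧ p.2 ∉ S) with hD
  have hmemD : ∀ p, p ∈ D ↔ (cube d).Adj p.1 p.2 ∧ p.1 ∈ S ∧ p.2 ∉ S := by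
    intro p; simp [hD]
  -- Step A : D.card ≤ boundary count
  have hA : D.card ≤ ({e ∈ (cube d).edgeSet | ∃ x y, e = s(x, y) ∧ x ∈ S ∧ y ∉ S}).ncard := by
    have hinj : Set.InjOn (fun p : (Fin d → Bool) × (Fin d → Bool) => s(p.1, p.2)) ↑D := by
      intro p hp q hq hpq
      rw [Finset.mem_coe, hmemD] at hp hq
      simp only [Sym2.eq_iff] at hpq
      rcases hpq with ⟨h1, h2⟩ | ⟨h1, h2⟩
      · exact Prod.ext h1 h2
      · exact absurd (h1 ▸ hp.2.1) hq.2.2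
    have himg : ((D.image fun p => s(p.1, p.2)) : Set (Sym2 (Fin d → Bool)))
        ⊆ {e ∈ (cube d).edgeSet | ∃ x y, e = s(x, y) ∧ x ∈ S ∧ y ∉ S} := by
      intro e he
      simp only [Finset.coe_image, Set.mem_image, Finset.mem_coe] at he
      obtain ⟨p, hp, rfl⟩ := he
      rw [hmemD] at hp
      exact ⟨hp.1, p.1, p.2, rfl, hp.2.1, hp.2.2⟩
    calc D.card = (D.image fun p => s(p.1, p.2)).card :=
          (Finset.card_image_of_injOn hinj).symm
      _ = ((D.image fun p => s(p.1, p.2)) : Set (Sym2 (Fin d → Bool))).ncard :=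
          (Set.ncard_coe_finset _).symm
      _ ≤ _ := Set.ncard_le_ncard himg (Set.toFinite _)
  -- the big auxiliary finset
  set P : Finset (((Fin d → Bool) × (Fin d → Bool)) × (Fin d → Bool)) :=
    (D ×ˢ Finset.univ).filter (fun q => ∀ j, q.1.1 j ≠ q.1.2 j → q.2 j = q.1.2 j) with hP
  -- Step B : injection from Sf ×ˢ Sfᶜ into P
  have hB : (Sf ×ˢ Sfᶜ).card ≤ P.card := by
    apply Finset.card_le_card_of_injOn (enc S)
    · intro p hp
      rw [Finset.mem_coe, Finset.mem_product, Finset.mem_compl] at hp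
      rw [hSf, Set.Finite.mem_toFinset] at hp
      obtain ⟨hx, hy⟩ := hp
      rw [Set.Finite.mem_toFinset] at hy
      obtain ⟨hadj, hu, hv, hw⟩ := enc_mem (S := S) (x := p.1) (y := p.2) hx hy
      rw [hP, Finset.mem_coe, Finset.mem_filter, Finset.mem_product, hmemD]
      exact ⟨⟨⟨hadj, hu, hv⟩, Finset.mem_univ _⟩, hw⟩
    · intro p hp q hq hpq
      rw [Finset.coe_product, Set.mem_prod] at hp hq
      have hp1 : p.1 ∈ S := by
        have := hp.1; rw [Finset.mem_coe, hSf, Set.Finite.mem_toFinset] at this; exact this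
      have hq1 : q.1 ∈ S := by
        have := hq.1; rw [Finset.mem_coe, hSf, Set.Finite.mem_toFinset] at this; exact this
      have hp2 : p.2 ∉ S := by
        have := hp.2
        rw [Finset.mem_coe, Finset.mem_compl, hSf, Set.Finite.mem_toFinset] at this
        exact this
      have hq2 : q.2 ∉ S := by
        have := hq.2
        rw [Finset.mem_coe, Finset.mem_compl, hSf, Set.Finite.mem_toFinset] at this
        exact this
      obtain ⟨h1, h2⟩ := enc_inj hp1 hp2 hq1 hq2 hpq
      exact Prod.ext h1 h2
  -- Step C : P.card ≤ 2^(d-1) * D.card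
  have hC : P.card ≤ 2 ^ (d - 1) * D.card := by
    apply Finset.card_le_mul_card_image_of_maps_to (f := fun q => q.1)
      (fun q hq => by
        rw [hP, Finset.mem_filter, Finset.mem_product] at hq
        exact hq.1.1)
    intro a ha
    rw [hmemD] at ha
    have h1 : ({i | a.1 i ≠ a.2 i} : Finset (Fin d)).card = 1 := ha.1
    obtain ⟨k₀, hk₀⟩ := Finset.card_eq_one.mp h1
    have hk0 : a.1 k₀ ≠ a.2 k₀ := by
      have : k₀ ∈ ({i | a.1 i ≠ a.2 i} : Finset (Fin d)) := hk₀ ▸ Finset.mem_singleton_self k₀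
      simpa using this
    calc (P.filter fun q => q.1 = a).card
        ≤ ({w : Fin d → Bool | w k₀ = a.2 k₀} : Finset (Fin d → Bool)).card := by
          apply Finset.card_le_card_of_injOn (fun q => q.2)
          · intro q hq
            rw [Finset.mem_coe, Finset.mem_filter] at hq
            obtain ⟨hqP, hqa⟩ := hq
            rw [hP, Finset.mem_filter] at hqP
            have := hqP.2 k₀ (hqa ▸ hk0)
            rw [hqa] at this
            simpa using this
          · intro q hq r hr hqr
            rw [Finset.mem_coe, Finset.mem_filter] at hq hr
            exact Prod.ext (hq.2.trans hr.2.symm) hqr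
      _ = 2 ^ (d - 1) := card_fix k₀ (a.2 k₀)
  -- Step D : arithmetic
  have hcardV : Fintype.card (Fin d → Bool) = 2 ^ d := by simp
  have hcompl : Sfᶜ.card = 2 ^ d - S.ncard := by
    rw [Finset.card_compl, hScard, hcardV]
  have hprod : (Sf ×ˢ Sfᶜ).card = S.ncard * (2 ^ d - S.ncard) := by
    rw [Finset.card_product, hScard, hcompl]
  have h2d : 2 ^ d = 2 * 2 ^ (d - 1) := by
    conv_lhs => rw [show d = (d - 1) + 1 by omega]
    rw [pow_succ']
  have key : S.ncard * 2 ^ (d - 1) ≤ D.card * 2 ^ (d - 1) := by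
    calc S.ncard * 2 ^ (d - 1) ≤ S.ncard * (2 ^ d - S.ncard) :=
          Nat.mul_le_mul_left _ (by omega)
      _ = (Sf ×ˢ Sfᶜ).card := hprod.symm
      _ ≤ P.card := hB
      _ ≤ 2 ^ (d - 1) * D.card := hC
      _ = D.card * 2 ^ (d - 1) := Nat.mul_comm _ _
  have hfinal : S.ncard ≤ D.card :=
    Nat.le_of_mul_le_mul_right key (Nat.pow_pos (by norm_num))
  exact hfinal.trans hA
end
end

section
/- There exists ε₀ > 0 such that for every 0 < ε ≤ ε₀ the following holds. For each d, let H = H(d) be a (deterministic) subgraph of Q^d such that every connected component of H has at least n^{1/3} vertices and at most n^{10ε} vertices of Q^d lie outside the vertex set of H, where n = 2^d. Then with probability tending to 1 as d → ∞, in the union of H with the random subgraph Q^d_ε, all vertices of H lie in a single connected component. -/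
open MeasureTheory

noncomputable section

/-- The random spanning subgraph of `cube d` determined by the coin flips `ω`:
an edge of the cube is retained iff its coin shows `true`. -/
def perc (d : ℕ) (ω : Sym2 (Fin d → Bool) → Bool) : SimpleGraph (Fin d → Bool) :=
  SimpleGraph.fromEdgeSet {e | e ∈ (cube d).edgeSet ∧ ω e = true}

/-- Bernoulli measure on `Bool` with success probability `p`. -/
def bern (p : ℝ) : Measure Bool :=
  (ENNReal.ofReal p) • Measure.dirac true + (ENNReal.ofReal (1 - p)) • Measure.dirac false

/-- The product Bernoulli measure: each potential edge is kept independently with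
probability `p`.  Under this measure, `perc d ω` is distributed as `Q^d_p`. -/
def percMeasure (d : ℕ) (p : ℝ) : Measure (Sym2 (Fin d → Bool) → Bool) :=
  Measure.pi fun _ => bern p

/-!
If the vertices of `H` do not all lie in one component of `H ∪ Q^d_ε`, then some union `S` of
`H`-components with `|S| ≤ n/2` has all its cube edges into `V(H) \ S` closed. Canonical paths give
the edge-isoperimetric bound `|S| ≤ 2|∂S|`. As every component has at least `n^{1/3}` vertices while
at most `d n^{10ε}` cube edges leave `V(H)`, a side made of `t` components has at least `t q` edges
into `V(H) \ S`, where `q` can be taken to be a large multiple of `d`. A side is determined by its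
set of components, so the union bound gives a failure probability of at most
`∑_{T ≠ ∅} (1 - ε)^{q |T|} ≤ exp (n (1 - ε)^q) - 1`, which tends to `0` once `(1 - ε)^q ≤ 4^{-d}`.
-/

open Finset Filter
open scoped Classical Topology

namespace Sprinkling

variable {d : ℕ}

/-- Indexed by `ℕ` so that it is total; the identity for `d ≤ k`. -/
def flipAt (x : Fin d → Bool) (k : ℕ) : Fin d → Bool :=
  fun j => if (j : ℕ) = k then !x j else x j

lemma flipAt_flipAt (x : Fin d → Bool) (k : ℕ) : flipAt (flipAt x k) k = x := by
  funext j
  by_cases h : (j : ℕ) = k <;> simp [flipAt, h]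

lemma flipAt_injOn (x : Fin d → Bool) : Set.InjOn (flipAt x) (Set.Iio d) := by
  intro k hk l hl h
  have := congrFun h ⟨k, hk⟩
  by_contra hkl
  simp [flipAt, hkl] at this

lemma cube_adj_flipAt (x : Fin d → Bool) {k : ℕ} (hk : k < d) : (cube d).Adj x (flipAt x k) := by
  show hammingDist x (flipAt x k) = 1
  rw [hammingDist, card_eq_one]
  refine ⟨⟨k, hk⟩, ?_⟩
  ext j
  by_cases h : (j : ℕ) = k <;> simp [flipAt, h, Fin.ext_iff]

/-- The darts of the cube from `S` to `T`, each recorded as (direction, tail). -/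
def cubeDarts (S T : Finset (Fin d → Bool)) : Finset (ℕ × (Fin d → Bool)) :=
  {p ∈ range d ×ˢ S | flipAt p.2 p.1 ∈ T}

lemma card_cubeDarts_le (S T : Finset (Fin d → Bool)) : #(cubeDarts S T) ≤ d * #T := by
  calc #(cubeDarts S T) ≤ #(range d ×ˢ T) := by
        refine card_le_card_of_injOn (fun p => (p.1, flipAt p.2 p.1)) ?_ ?_
        · intro p hp
          simp only [cubeDarts, coe_filter, mem_product, mem_range, Set.mem_ofPred_eq] at hp
          simp [hp.1.1, hp.2]
        · rintro ⟨k, x⟩ - ⟨l, y⟩ - h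
          simp only [Prod.mk.injEq] at h
          obtain ⟨rfl, h⟩ := h
          rw [← flipAt_flipAt x k, h, flipAt_flipAt]
    _ = d * #T := by rw [card_product, card_range]

lemma card_cubeDarts_le_add {S T T₁ T₂ : Finset (Fin d → Bool)} (h : T ⊆ T₁ ∪ T₂) :
    #(cubeDarts S T) ≤ #(cubeDarts S T₁) + #(cubeDarts S T₂) := by
  calc #(cubeDarts S T) ≤ #(cubeDarts S (T₁ ∪ T₂)) := card_le_card (monotone_filter_right _
        fun _ _ hT => h hT)
    _ ≤ _ := by
        simp only [cubeDarts, mem_union, filter_or]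
        exact card_union_le _ _

/-- The vertex taking its first `k` coordinates from `v` and the others from `u`; as `k` runs
from `0` to `d` this walks along a geodesic from `u` to `v`. -/
def mix (u v : Fin d → Bool) (k : ℕ) : Fin d → Bool :=
  fun j => if (j : ℕ) < k then v j else u j

lemma mix_zero (u v : Fin d → Bool) : mix u v 0 = u := by
  funext j; simp [mix]

lemma mix_of_le (u v : Fin d → Bool) {k : ℕ} (hk : d ≤ k) : mix u v k = v := by
  funext j; simp [mix, lt_of_lt_of_le j.2 hk]

lemma mix_succ_eq_or (u v : Fin d → Bool) (k : ℕ) :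
    mix u v (k + 1) = mix u v k ∨ mix u v (k + 1) = flipAt (mix u v k) k := by
  by_cases h : ∀ j : Fin d, (j : ℕ) = k → u j = v j
  · left
    funext j
    by_cases hj : (j : ℕ) = k
    · simp [mix, hj, h j hj]
    · simp only [mix]
      congr 1
      exact propext (by omega)
  · right
    push Not at h
    obtain ⟨j, hjk, hj⟩ := h
    funext i
    by_cases hi : (i : ℕ) = k
    · obtain rfl : i = j := Fin.ext (hi.trans hjk.symm)
      cases hu : u i <;> cases hv : v i <;> simp_all [mix, flipAt]
    · simp only [mix, flipAt, hi, if_false]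
      congr 1
      exact propext (by omega)

lemma eq_of_mix_eq {u v u' v' : Fin d → Bool} {k : ℕ} (h : mix u v k = mix u' v' k)
    (h' : mix v u k = mix v' u' k) : u = u' ∧ v = v' := by
  constructor <;> funext j <;> have := congrFun h j <;> have := congrFun h' j <;>
    by_cases hj : (j : ℕ) < k <;> simp_all [mix]

def lastVisit (S : Finset (Fin d → Bool)) (u v : Fin d → Bool) : ℕ :=
  Nat.findGreatest (fun k => mix u v k ∈ S) d

lemma lastVisit_spec {S : Finset (Fin d → Bool)} {u v : Fin d → Bool} (hu : u ∈ S) (hv : v ∉ S) :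
    lastVisit S u v < d ∧ mix u v (lastVisit S u v) ∈ S ∧
      flipAt (mix u v (lastVisit S u v)) (lastVisit S u v) ∉ S := by
  set k := lastVisit S u v
  have hkS : mix u v k ∈ S := Nat.findGreatest_spec (P := fun k => mix u v k ∈ S)
    (Nat.zero_le d) (by rwa [mix_zero])
  have hkd : k < d := by
    refine lt_of_le_of_ne (Nat.findGreatest_le d) fun hk => hv ?_
    rwa [hk, mix_of_le u v le_rfl] at hkS
  have hnext : mix u v (k + 1) ∉ S :=
    Nat.findGreatest_is_greatest (P := fun k => mix u v k ∈ S) (Nat.lt_succ_self k) hkd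
  refine ⟨hkd, hkS, ?_⟩
  rcases mix_succ_eq_or u v k with h | h
  · exact absurd (h ▸ hkS) hnext
  · rwa [← h]

/-- Canonical paths: `u ∈ S` and `v ∉ S` are recovered from the dart `(k, mix u v k)` at which the
geodesic from `u` to `v` last leaves `S`, together with `mix v u k`. -/
theorem card_mul_card_compl_le (S : Finset (Fin d → Bool)) :
    #S * #Sᶜ ≤ #(cubeDarts S Sᶜ) * 2 ^ d := by
  have hV : #(univ : Finset (Fin d → Bool)) = 2 ^ d := by simp
  rw [← card_product, ← hV, ← card_product]
  refine card_le_card_of_injOn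
    (fun p => ((lastVisit S p.1 p.2, mix p.1 p.2 (lastVisit S p.1 p.2)),
      mix p.2 p.1 (lastVisit S p.1 p.2))) ?_ ?_
  · rintro ⟨u, v⟩ huv
    simp only [coe_product, Set.mem_prod, mem_coe, mem_compl] at huv
    obtain ⟨hk, hS, hflip⟩ := lastVisit_spec huv.1 huv.2
    simp [cubeDarts, hk, hS, hflip]
  · rintro ⟨u, v⟩ huv ⟨u', v'⟩ huv' h
    simp only [coe_product, Set.mem_prod, mem_coe, mem_compl] at huv huv'
    simp only [Prod.mk.injEq] at h
    obtain ⟨⟨hk, hmix⟩, hmix'⟩ := h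
    rw [← hk] at hmix hmix'
    obtain ⟨rfl, rfl⟩ := eq_of_mix_eq hmix hmix'
    rfl

theorem card_le_two_mul_card_cubeDarts {S : Finset (Fin d → Bool)} (hS : 2 * #S ≤ 2 ^ d) :
    #S ≤ 2 * #(cubeDarts S Sᶜ) := by
  have hc : 2 ^ d ≤ 2 * #Sᶜ := by simp only [card_compl, Fintype.card_fun]; simp; omega
  have key : #S * 2 ^ d ≤ 2 * #(cubeDarts S Sᶜ) * 2 ^ d := by
    calc #S * 2 ^ d ≤ #S * (2 * #Sᶜ) := Nat.mul_le_mul_left _ hc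
      _ = 2 * (#S * #Sᶜ) := by ring
      _ ≤ 2 * (#(cubeDarts S Sᶜ) * 2 ^ d) := Nat.mul_le_mul_left 2 (card_mul_card_compl_le S)
      _ = 2 * #(cubeDarts S Sᶜ) * 2 ^ d := by ring
  exact Nat.le_of_mul_le_mul_right key (by positivity)

def cubeEdgesBetween (S T : Finset (Fin d → Bool)) : Finset (Sym2 (Fin d → Bool)) :=
  (cubeDarts S T).image fun p => s(p.2, flipAt p.2 p.1)

lemma card_cubeEdgesBetween {S T : Finset (Fin d → Bool)} (h : Disjoint S T) :
    #(cubeEdgesBetween S T) = #(cubeDarts S T) := by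
  refine card_image_of_injOn ?_
  rintro ⟨k, x⟩ hx ⟨l, y⟩ hy hxy
  simp only [cubeDarts, coe_filter, mem_product, mem_range, Set.mem_ofPred_eq] at hx hy
  rcases Sym2.eq_iff.mp hxy with ⟨rfl, hf⟩ | ⟨hxy, -⟩
  · rw [flipAt_injOn x hx.1.1 hy.1.1 hf]
  · simp only at hxy
    exact absurd (hxy ▸ hy.2) (disjoint_left.mp h hx.1.2)

lemma exists_adj_of_mem_cubeEdgesBetween {S T : Finset (Fin d → Bool)} {e : Sym2 (Fin d → Bool)}
    (he : e ∈ cubeEdgesBetween S T) : ∃ x ∈ S, ∃ y ∈ T, (cube d).Adj x y ∧ e = s(x, y) := by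
  simp only [cubeEdgesBetween, cubeDarts, mem_image, mem_filter, mem_product, mem_range] at he
  obtain ⟨⟨k, x⟩, ⟨⟨hk, hx⟩, hy⟩, rfl⟩ := he
  exact ⟨x, hx, _, hy, cube_adj_flipAt x hk, rfl⟩

section Probability

variable {p : ℝ}

lemma isProbabilityMeasure_bern (h0 : 0 ≤ p) (h1 : p ≤ 1) : IsProbabilityMeasure (bern p) := by
  constructor
  simp only [bern, Measure.add_apply, Measure.smul_apply, measure_univ, smul_eq_mul, mul_one]
  rw [← ENNReal.ofReal_add h0 (by linarith), add_sub_cancel, ENNReal.ofReal_one]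

lemma isProbabilityMeasure_percMeasure {d : ℕ} (h0 : 0 ≤ p) (h1 : p ≤ 1) :
    IsProbabilityMeasure (percMeasure d p) := by
  have := isProbabilityMeasure_bern h0 h1
  rw [percMeasure]
  infer_instance

lemma pi_bern_forall_eq_false {ι : Type*} [Fintype ι] (h0 : 0 ≤ p) (h1 : p ≤ 1) (Γ : Finset ι) :
    Measure.pi (fun _ : ι => bern p) {ω | ∀ e ∈ Γ, ω e = false} = ENNReal.ofReal (1 - p) ^ #Γ := by
  have := isProbabilityMeasure_bern h0 h1
  have hpi : {ω : ι → Bool | ∀ e ∈ Γ, ω e = false}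
      = Set.pi Set.univ fun e => if e ∈ Γ then {false} else Set.univ := by
    ext ω
    simp only [Set.mem_ofPred_eq, Set.mem_pi, Set.mem_univ, true_imp_iff]
    refine forall_congr' fun e => ?_
    by_cases he : e ∈ Γ <;> simp [he]
  have hfalse : bern p {false} = ENNReal.ofReal (1 - p) := by simp [bern]
  rw [hpi, Measure.pi_pi]
  simp only [apply_ite (bern p), hfalse, measure_univ]
  rw [prod_ite_mem, univ_inter, prod_const]

end Probability

end Sprinkling

namespace Finset

/-- Summed over all nonempty `T`, `y ^ #T` gives `(1 + y) ^ N - 1 ≤ exp (N y) - 1`. -/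
lemma sum_pow_card_le_exp_sub_one {ι α : Type*} [Fintype α] {s : Finset ι} {f : ι → Finset α}
    (hf : Set.InjOn f s) (hne : ∀ i ∈ s, (f i).Nonempty) {y : ℝ} (hy : 0 ≤ y) :
    ∑ i ∈ s, y ^ #(f i) ≤ Real.exp (Fintype.card α * y) - 1 := by
  have hall : ∑ T : Finset α, y ^ #T = (y + 1) ^ Fintype.card α := by
    simpa using Fintype.sum_pow_mul_eq_add_pow α y 1
  calc ∑ i ∈ s, y ^ #(f i) = ∑ T ∈ s.image f, y ^ #T := by rw [sum_image hf]
    _ ≤ ∑ T ∈ univ.erase ∅, y ^ #T := by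
        refine sum_le_sum_of_subset_of_nonneg ?_ fun _ _ _ => pow_nonneg hy _
        intro T hT
        obtain ⟨i, hi, rfl⟩ := mem_image.mp hT
        exact mem_erase.mpr ⟨(hne i hi).ne_empty, mem_univ _⟩
    _ = (y + 1) ^ Fintype.card α - 1 := by
        rw [sum_erase_eq_sub (mem_univ _), hall, card_empty, pow_zero]
    _ ≤ Real.exp y ^ Fintype.card α - 1 := by
        gcongr
        linarith [Real.add_one_le_exp y]
    _ = Real.exp (Fintype.card α * y) - 1 := by rw [Real.exp_nat_mul]

end Finset

namespace SimpleGraph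

variable {V : Type*} (G : SimpleGraph V)

def IsComponentUnion (S : Finset V) : Prop :=
  ∀ u ∈ S, ∀ w, G.Reachable u w → w ∈ S

variable {G}

lemma IsComponentUnion.mem_iff {S : Finset V} (hS : G.IsComponentUnion S) {v : V} :
    v ∈ S ↔ G.connectedComponentMk v ∈ S.image G.connectedComponentMk := by
  refine ⟨mem_image_of_mem _, fun hv => ?_⟩
  obtain ⟨u, hu, huv⟩ := mem_image.mp hv
  exact hS u hu v (ConnectedComponent.exact huv)

lemma injOn_image_connectedComponentMk :
    Set.InjOn (fun S : Finset V => S.image G.connectedComponentMk) {S | G.IsComponentUnion S} := by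
  intro S hS T hT h
  ext v
  rw [hS.mem_iff, hT.mem_iff]
  simp only at h
  rw [h]

lemma IsComponentUnion.mul_card_image_le [Fintype V] {S : Finset V} (hS : G.IsComponentUnion S)
    {s : ℕ} (hs : ∀ v ∈ S, s ≤ #{w | G.Reachable v w}) :
    s * #(S.image G.connectedComponentMk) ≤ #S := by
  refine mul_card_image_le_card S s fun c hc => ?_
  obtain ⟨v, hv, rfl⟩ := mem_image.mp hc
  refine (hs v hv).trans (card_le_card fun w hw => ?_)
  have hvw : G.Reachable v w := (mem_filter.mp hw).2
  exact mem_filter.mpr ⟨hS v hv w hvw, ConnectedComponent.sound hvw.symm⟩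

lemma exists_small_side_of_not_subset_supp [Nonempty V] {U : Finset V}
    (h : ¬∃ C : G.ConnectedComponent, ↑U ⊆ C.supp) :
    ∃ S ⊆ U, S.Nonempty ∧ 2 * #S ≤ #U ∧ ∀ u ∈ S, ∀ w ∈ U, G.Reachable u w → w ∈ S := by
  obtain ⟨v, hv⟩ : U.Nonempty := by
    rw [nonempty_iff_ne_empty]
    rintro rfl
    exact h ⟨G.connectedComponentMk (Classical.arbitrary V), by simp⟩
  obtain ⟨w, hwU, hvw⟩ : ∃ w ∈ U, ¬G.Reachable v w := by
    by_contra! hall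
    exact h ⟨G.connectedComponentMk v, fun w hw =>
      ConnectedComponent.sound (hall w hw).symm⟩
  have hcard : #{w ∈ U | G.Reachable v w} + #{w ∈ U | ¬G.Reachable v w} = #U :=
    card_filter_add_card_filter_not _
  by_cases hA : 2 * #{w ∈ U | G.Reachable v w} ≤ #U
  · refine ⟨_, filter_subset _ _, ⟨v, mem_filter.mpr ⟨hv, .refl v⟩⟩, hA, ?_⟩
    intro u hu x hx hux
    exact mem_filter.mpr ⟨hx, (mem_filter.mp hu).2.trans hux⟩
  · refine ⟨{w ∈ U | ¬G.Reachable v w}, filter_subset _ _, ⟨w, mem_filter.mpr ⟨hwU, hvw⟩⟩,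
      by omega, ?_⟩
    intro u hu x hx hux
    exact mem_filter.mpr ⟨hx, fun hvx => (mem_filter.mp hu).2 (hvx.trans hux.symm)⟩

namespace Subgraph

variable {H : G.Subgraph}

lemma mem_verts_of_spanningCoe_reachable {v w : V} (hv : v ∈ H.verts)
    (h : H.spanningCoe.Reachable v w) :
    w ∈ H.verts := by
  obtain ⟨p⟩ := h.symm
  cases p with
  | nil => exact hv
  | cons hadj _ => exact hadj.fst_mem

lemma le_card_spanningCoe_reachable [Fintype V] {s : ℕ}
    (hH : ∀ C : H.coe.ConnectedComponent, s ≤ C.supp.ncard)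
    {v : V} (hv : v ∈ H.verts) : s ≤ #{w | H.spanningCoe.Reachable v w} := by
  let toSpanning : H.coe →g H.spanningCoe := ⟨Subtype.val, fun h => h⟩
  calc s ≤ (H.coe.connectedComponentMk ⟨v, hv⟩).supp.ncard := hH _
    _ ≤ (({w | H.spanningCoe.Reachable v w} : Finset V) : Set V).ncard := by
        refine Set.ncard_le_ncard_of_injOn Subtype.val (fun u hu => ?_) Subtype.val_injective.injOn
        have hvu := ConnectedComponent.exact hu
        rw [mem_coe, mem_filter]
        exact ⟨mem_univ _, (hvu.map toSpanning).symm⟩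
    _ = _ := Set.ncard_coe_finset _

end Subgraph

end SimpleGraph

namespace Sprinkling

variable {d : ℕ} (H : (cube d).Subgraph)

def mergedEvent : Set (Sym2 (Fin d → Bool) → Bool) :=
  {ω | ∃ C : (H.spanningCoe ⊔ perc d ω).ConnectedComponent, H.verts ⊆ C.supp}

/-- The candidate sides of a cut of `V(H)` that no edge of `H ∪ Q^d_ε` crosses. -/
def IsSmallSide (S : Finset (Fin d → Bool)) : Prop :=
  S.Nonempty ∧ ↑S ⊆ H.verts ∧ H.spanningCoe.IsComponentUnion S ∧ 2 * #S ≤ 2 ^ d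

variable {H}

lemma exists_isSmallSide_of_not_mem_mergedEvent {ω : Sym2 (Fin d → Bool) → Bool}
    (h : ω ∉ mergedEvent H) :
    ∃ S, IsSmallSide H S ∧ ∀ e ∈ cubeEdgesBetween S (H.verts.toFinset \ S), ω e = false := by
  obtain ⟨S, hSU, hne, hcard, hclosed⟩ :=
    (H.spanningCoe ⊔ perc d ω).exists_small_side_of_not_subset_supp (U := H.verts.toFinset)
      (by simpa [mergedEvent] using h)
  have hSV : ↑S ⊆ H.verts := fun x hx => Set.mem_toFinset.mp (hSU hx)
  refine ⟨S, ⟨hne, hSV, fun u hu w huw => ?_, ?_⟩, fun e he => ?_⟩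
  · exact hclosed u hu w
      (Set.mem_toFinset.mpr (H.mem_verts_of_spanningCoe_reachable (hSV hu) huw))
      (huw.mono le_sup_left)
  · exact hcard.trans ((card_le_univ _).trans (by simp))
  · obtain ⟨x, hx, y, hy, hadj, rfl⟩ := exists_adj_of_mem_cubeEdgesBetween he
    rw [Finset.mem_sdiff] at hy
    by_contra hopen
    have hperc : (perc d ω).Adj x y := by
      simpa [perc, hadj, hadj.ne] using hopen
    exact hy.2 (hclosed x hx y hy.1 (SimpleGraph.Adj.reachable (Or.inr hperc)))

/-- Each of the `t` components of a small side has at least `2q + 2d|V(H)ᶜ|` vertices, and at most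
`d|V(H)ᶜ|` of the boundary darts leave `V(H)`, so isoperimetry leaves `tq` edges inside `V(H)`. -/
lemma mul_le_card_cubeEdgesBetween {q : ℕ}
    (hH : ∀ C : H.coe.ConnectedComponent, 2 * q + 2 * d * #H.verts.toFinsetᶜ ≤ C.supp.ncard)
    {S : Finset (Fin d → Bool)} (hS : IsSmallSide H S) :
    #(S.image H.spanningCoe.connectedComponentMk) * q
      ≤ #(cubeEdgesBetween S (H.verts.toFinset \ S)) := by
  obtain ⟨hne, hSV, hclosed, hhalf⟩ := hS
  set U := H.verts.toFinset
  set t := #(S.image H.spanningCoe.connectedComponentMk)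
  have ht : 1 ≤ t := card_pos.mpr (hne.image _)
  have hsize : (2 * q + 2 * d * #Uᶜ) * t ≤ #S :=
    hclosed.mul_card_image_le fun v hv => H.le_card_spanningCoe_reachable hH (hSV hv)
  have hiso : #S ≤ 2 * #(cubeDarts S Sᶜ) := card_le_two_mul_card_cubeDarts hhalf
  have hsplit : #(cubeDarts S Sᶜ) ≤ #(cubeDarts S (U \ S)) + d * #Uᶜ := by
    refine (card_cubeDarts_le_add (T₁ := U \ S) (T₂ := Uᶜ) fun x hx => ?_).trans
      (Nat.add_le_add_left (card_cubeDarts_le S Uᶜ) _)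
    by_cases hxU : x ∈ U <;> simp_all
  rw [card_cubeEdgesBetween disjoint_sdiff]
  nlinarith [Nat.le_mul_of_pos_right (d * #Uᶜ) ht]

theorem percMeasure_mergedEvent_compl_le {ε : ℝ} (h0 : 0 ≤ ε) (h1 : ε ≤ 1) {q : ℕ}
    (hH : ∀ C : H.coe.ConnectedComponent, 2 * q + 2 * d * #H.verts.toFinsetᶜ ≤ C.supp.ncard) :
    percMeasure d ε (mergedEvent H)ᶜ ≤ ENNReal.ofReal (Real.exp (2 ^ d * (1 - ε) ^ q) - 1) := by
  set sides := ({S | IsSmallSide H S} : Finset (Finset (Fin d → Bool)))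
  set y := (1 - ε) ^ q
  have hy : 0 ≤ y := pow_nonneg (by linarith) q
  have hcomps : Fintype.card H.spanningCoe.ConnectedComponent ≤ 2 ^ d :=
    (Fintype.card_le_of_surjective H.spanningCoe.connectedComponentMk Quot.mk_surjective).trans
      (by simp)
  calc percMeasure d ε _
      ≤ percMeasure d ε (⋃ S ∈ sides, {ω | ∀ e ∈ cubeEdgesBetween S (H.verts.toFinset \ S),
          ω e = false}) := by
        refine measure_mono fun ω hω => ?_
        obtain ⟨S, hS, hclosed⟩ := exists_isSmallSide_of_not_mem_mergedEvent hω
        exact Set.mem_biUnion (by simpa [sides] using hS) hclosed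
    _ ≤ ∑ S ∈ sides, percMeasure d ε
          {ω | ∀ e ∈ cubeEdgesBetween S (H.verts.toFinset \ S), ω e = false} :=
        measure_biUnion_finset_le _ _
    _ ≤ ∑ S ∈ sides, ENNReal.ofReal (y ^ #(S.image H.spanningCoe.connectedComponentMk)) := by
        refine sum_le_sum fun S hS => ?_
        rw [percMeasure, pi_bern_forall_eq_false h0 h1, ← ENNReal.ofReal_pow (by linarith),
          ← pow_mul]
        refine ENNReal.ofReal_le_ofReal (pow_le_pow_of_le_one (by linarith) (by linarith) ?_)
        rw [mul_comm]
        exact mul_le_card_cubeEdgesBetween hH (by simpa [sides] using hS)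
    _ = ENNReal.ofReal (∑ S ∈ sides, y ^ #(S.image H.spanningCoe.connectedComponentMk)) :=
        (ENNReal.ofReal_sum_of_nonneg fun _ _ => pow_nonneg hy _).symm
    _ ≤ ENNReal.ofReal (Real.exp (2 ^ d * y) - 1) := by
        refine ENNReal.ofReal_le_ofReal ((Finset.sum_pow_card_le_exp_sub_one ?_ ?_ hy).trans ?_)
        · exact SimpleGraph.injOn_image_connectedComponentMk.mono fun S hS => by
            simp only [sides, coe_filter, mem_univ, true_and, Set.mem_ofPred_eq] at hS
            exact hS.2.2.1
        · exact fun S hS => ((by simpa [sides] using hS : IsSmallSide H S).1.image _)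
        · gcongr
          exact_mod_cast hcomps

/-- `d = o((2^(7/30))^d)` and `n^(1/3) = n^(7/30) n^(1/10)` for `n = 2^d`. -/
lemma eventually_mul_rpow_le (A : ℝ) :
    ∀ᶠ d : ℕ in atTop, A * d * ((2 : ℝ) ^ d) ^ (1 / 10 : ℝ) ≤ ((2 : ℝ) ^ d) ^ (1 / 3 : ℝ) := by
  have hr : (1 : ℝ) < 2 ^ (7 / 30 : ℝ) := Real.one_lt_rpow (by norm_num) (by norm_num)
  have hA : 0 < |A| + 1 := by positivity
  filter_upwards [(isLittleO_coe_const_pow_of_one_lt (R := ℝ) hr).bound (inv_pos.mpr hA)] with d hd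
  rw [Real.norm_natCast, norm_pow, Real.norm_of_nonneg (by positivity)] at hd
  have hsplit : ((2 : ℝ) ^ d) ^ (1 / 3 : ℝ)
      = ((2 : ℝ) ^ (7 / 30 : ℝ)) ^ d * ((2 : ℝ) ^ d) ^ (1 / 10 : ℝ) := by
    rw [Real.rpow_pow_comm (by norm_num), ← Real.rpow_add (by positivity)]
    norm_num
  rw [hsplit]
  gcongr
  calc A * d ≤ (|A| + 1) * d := by gcongr; linarith [le_abs_self A]
    _ ≤ _ := by rwa [← le_inv_mul_iff₀ hA]

lemma le_ncard_supp {ε : ℝ} (hε : ε ≤ 1 / 100) {M : ℕ} {H : (cube d).Subgraph}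
    (hd : (2 * M + 2) * d * ((2 : ℝ) ^ d) ^ (1 / 10 : ℝ) ≤ ((2 : ℝ) ^ d) ^ (1 / 3 : ℝ))
    (hcomp : ∀ C : H.coe.ConnectedComponent, ((2 : ℝ) ^ d) ^ ((1 : ℝ) / 3) ≤ (C.supp.ncard : ℝ))
    (hout : ((H.vertsᶜ).ncard : ℝ) ≤ ((2 : ℝ) ^ d) ^ (10 * ε)) (C : H.coe.ConnectedComponent) :
    2 * (M * d) + 2 * d * #H.verts.toFinsetᶜ ≤ C.supp.ncard := by
  have hn : (1 : ℝ) ≤ (2 : ℝ) ^ d := one_le_pow₀ (by norm_num)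
  have hout' : (#H.verts.toFinsetᶜ : ℝ) ≤ ((2 : ℝ) ^ d) ^ (1 / 10 : ℝ) := by
    rw [← Set.toFinset_compl, ← Set.ncard_eq_toFinset_card']
    exact hout.trans (Real.rpow_le_rpow_of_exponent_le hn (by linarith))
  have h1 : (1 : ℝ) ≤ ((2 : ℝ) ^ d) ^ (1 / 10 : ℝ) := Real.one_le_rpow hn (by norm_num)
  have : ((2 * (M * d) + 2 * d * #H.verts.toFinsetᶜ : ℕ) : ℝ) ≤ C.supp.ncard := by
    push_cast
    refine le_trans ?_ (hd.trans (hcomp C))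
    nlinarith [mul_le_mul_of_nonneg_left h1 (by positivity : (0 : ℝ) ≤ 2 * M * d)]
  exact_mod_cast this

theorem tendsto_percMeasure_mergedEvent_compl {ε : ℝ} (hε : 0 < ε) (hε' : ε ≤ 1 / 100)
    (H : (d : ℕ) → (cube d).Subgraph)
    (hcomp : ∀ d, ∀ C : (H d).coe.ConnectedComponent,
      ((2 : ℝ) ^ d) ^ ((1 : ℝ) / 3) ≤ (C.supp.ncard : ℝ))
    (hout : ∀ d, ((((H d).verts)ᶜ).ncard : ℝ) ≤ ((2 : ℝ) ^ d) ^ (10 * ε)) :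
    Tendsto (fun d => percMeasure d ε (mergedEvent (H d))ᶜ) atTop (𝓝 0) := by
  obtain ⟨M, hM⟩ := exists_pow_lt_of_lt_one (by norm_num : (0 : ℝ) < 1 / 4)
    (by linarith : 1 - ε < 1)
  have hbound : ∀ᶠ d in atTop,
      percMeasure d ε (mergedEvent (H d))ᶜ ≤ ENNReal.ofReal (Real.exp ((1 / 2) ^ d) - 1) := by
    filter_upwards [eventually_mul_rpow_le (2 * M + 2)] with d hd
    refine (percMeasure_mergedEvent_compl_le hε.le (by linarith)
      (le_ncard_supp hε' hd (hcomp d) (hout d))).trans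
      (ENNReal.ofReal_le_ofReal (sub_le_sub_right (Real.exp_le_exp.mpr ?_) 1))
    calc (2 : ℝ) ^ d * (1 - ε) ^ (M * d) ≤ 2 ^ d * (1 / 4) ^ d := by
          rw [pow_mul]
          gcongr
          exact pow_nonneg (by linarith) M
      _ = (1 / 2) ^ d := by rw [← mul_pow]; norm_num
  have hlim : Tendsto (fun d : ℕ => ENNReal.ofReal (Real.exp ((1 / 2) ^ d) - 1)) atTop (𝓝 0) := by
    have := ((Real.continuous_exp.tendsto 0).comp (tendsto_pow_atTop_nhds_zero_of_lt_one
      (by norm_num : (0 : ℝ) ≤ 1 / 2) (by norm_num))).sub_const 1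
    simpa using ENNReal.tendsto_ofReal this
  exact tendsto_of_tendsto_of_tendsto_of_le_of_le' tendsto_const_nhds hlim
    (Eventually.of_forall fun _ => zero_le) hbound

end Sprinkling

open Sprinkling in
/-- Sprinkling: there is `ε₀ > 0` such that for all `0 < ε ≤ ε₀`, if `H = H(d)` is a
subgraph of `Q^d` all of whose components have at least `n^(1/3)` vertices and at most
`n^(10ε)` vertices of `Q^d` lie outside `V(H)`, then whp all vertices of `H` lie in a
single connected component of `H ∪ Q^d_ε`. -/
theorem sprinkling_merges_components :
    ∃ ε₀ : ℝ, 0 < ε₀ ∧ ∀ ε : ℝ, 0 < ε → ε ≤ ε₀ →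
      ∀ H : (d : ℕ) → (cube d).Subgraph,
      (∀ d, ∀ C : (H d).coe.ConnectedComponent,
        ((2 : ℝ) ^ d) ^ ((1 : ℝ) / 3) ≤ (C.supp.ncard : ℝ)) →
      (∀ d, ((((H d).verts)ᶜ).ncard : ℝ) ≤ ((2 : ℝ) ^ d) ^ (10 * ε)) →
      Filter.Tendsto
        (fun d => percMeasure d ε
          {ω | ∃ C : ((H d).spanningCoe ⊔ perc d ω).ConnectedComponent,
            (H d).verts ⊆ C.supp})
        Filter.atTop (nhds 1) := by
  refine ⟨1 / 100, by norm_num, fun ε hε hε' H hcomp hout => ?_⟩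
  have hfail := tendsto_percMeasure_mergedEvent_compl hε hε' H hcomp hout
  have hsucc := ENNReal.Tendsto.sub tendsto_const_nhds hfail (Or.inl ENNReal.one_ne_top)
  rw [tsub_zero] at hsucc
  refine hsucc.congr fun d => ?_
  have := isProbabilityMeasure_percMeasure (d := d) hε.le (by linarith)
  rw [prob_compl_eq_one_sub (Set.toFinite _).measurableSet,
    ENNReal.sub_sub_cancel ENNReal.one_ne_top prob_le_one]
  rfl
end
end

section
/- Let H ⊆ H' be spanning subgraphs of the d-dimensional hypercube Q^d (d ≥ 1). Suppose H has a connected component C such that every vertex of Q^d not in C is an isolated vertex of H, and any two isolated vertices of H are at distance at least two in Q^d. Then H' is connected if and only if H' has minimum degree at least one. -/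
open MeasureTheory

noncomputable section

/-- A vertex is isolated in `G` if it has no neighbours. -/
def isolated {V : Type*} (G : SimpleGraph V) (v : V) : Prop := ∀ w, ¬ G.Adj v w

/-- If `H ⊆ H'` are spanning subgraphs of `Q^d` (`d ≥ 1`), `H` has a connected component
`C` such that every vertex outside `C` is isolated in `H`, and any two isolated vertices
of `H` are at distance at least two in `Q^d`, then `H'` is connected iff it has minimum
degree at least one. -/
theorem connected_iff_min_degree (d : ℕ) (hd : 1 ≤ d)
    (H H' : SimpleGraph (Fin d → Bool)) (hHH' : H ≤ H') (hH' : H' ≤ cube d)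
    (C : H.ConnectedComponent)
    (hiso : ∀ v, v ∉ C.supp → isolated H v)
    (hfar : ∀ u v, u ≠ v → isolated H u → isolated H v → 2 ≤ (cube d).dist u v) :
    H'.Connected ↔ ∀ v, ∃ w, H'.Adj v w := by
  constructor
  · intro hconn v
    set i : Fin d := ⟨0, hd⟩ with hi
    have hne : v ≠ Function.update v i (!(v i)) := by
      intro h
      have := congrFun h i
      simp at this
    obtain ⟨p⟩ := hconn.preconnected v (Function.update v i (!(v i)))
    exact ⟨_, p.adj_snd (SimpleGraph.Walk.not_nil_of_ne hne)⟩
  · intro hdeg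
    obtain ⟨v0, hv0⟩ := C.exists_rep
    have inC : ∀ v, v ∈ C.supp → H'.Reachable v v0 := by
      intro v hv
      rw [SimpleGraph.ConnectedComponent.mem_supp_iff] at hv
      have : H.Reachable v v0 :=
        SimpleGraph.ConnectedComponent.exact (by rw [hv, ← hv0]; rfl)
      exact this.mono hHH'
    have key : ∀ v, H'.Reachable v v0 := by
      intro v
      by_cases hv : v ∈ C.supp
      · exact inC v hv
      · have hv' := hiso v hv
        obtain ⟨w, hw⟩ := hdeg v
        have hwC : w ∈ C.supp := by
          by_contra hw'
          have h2 := hfar v w hw.ne hv' (hiso w hw')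
          have h1 : (cube d).dist v w = 1 :=
            SimpleGraph.dist_eq_one_iff_adj.mpr (hH' hw)
          omega
        exact (hw.reachable).trans (inC w hwC)
    exact (SimpleGraph.connected_iff _).mpr
      ⟨fun u v => (key u).trans (key v).symm, inferInstance⟩
end
end
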